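/- arXiv:1002.0238 — 10 statements merged into one kernel-verified Lean document; each statement's English description precedes it below -/
import Mathlib

section
/- Let R be a ring and p a positive integer such that every finitely generated left ideal of R can be generated by p elements. Then every finitely generated submodule N of a finitely generated left R-module M generated by g elements can be generated by p·g elements. -/
/-!
Induct on a generating set of `M`. If `M = span (insert x t)`, map `N` to `M ⧸ span t`: its image
lies in the cyclic module `R ∙ x̄`, a quotient of `R`, so it is spanned by `p` elements, which lift
to `N`. The rest of `N` is spanned by the differences between the generators of `N` and
suitable elements of the span of those lifts; these differences lie in `span t`, where induction
applies. Each generator of `M` thus costs at most `p` generators of `N`.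
-/

namespace Submodule

variable {R M P : Type*} [Ring R] [AddCommGroup M] [Module R M] [AddCommGroup P] [Module R P]

def FGSpanBound (L : Submodule R M) (k : ℕ) : Prop :=
  ∀ N ≤ L, N.FG → ∃ s : Finset M, s.card ≤ k ∧ span R (s : Set M) = N

theorem FGSpanBound.mono {L L' : Submodule R M} {k : ℕ} (h : L.FGSpanBound k) (hL : L' ≤ L) :
    L'.FGSpanBound k :=
  fun N hN => h N (hN.trans hL)

theorem exists_finset_card_le_map_span_eq (f : M →ₗ[R] P) {N : Submodule R M} {s : Finset P}
    (hs : (s : Set P) ⊆ N.map f) :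
    ∃ t : Finset M, t.card ≤ s.card ∧ (t : Set M) ⊆ N ∧ (span R (t : Set M)).map f = span R s := by
  classical
  choose! lift hlift_mem hlift_eq using fun y (hy : y ∈ s) => hs hy
  refine ⟨s.image lift, Finset.card_image_le, ?_, ?_⟩
  · simpa [Set.subset_def] using hlift_mem
  · rw [map_span, Finset.coe_image, Set.image_image, Set.image_congr hlift_eq, Set.image_id']

theorem FGSpanBound.map {L : Submodule R M} {k : ℕ} (h : L.FGSpanBound k) (f : M →ₗ[R] P) :
    (L.map f).FGSpanBound k := by
  classical
  rintro N hNL ⟨w, rfl⟩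
  obtain ⟨t, -, htL, hmap⟩ := exists_finset_card_le_map_span_eq f (subset_span.trans hNL)
  obtain ⟨s, hs, hspan⟩ := h _ (span_le.2 htL) ⟨t, rfl⟩
  refine ⟨s.image f, Finset.card_image_le.trans hs, ?_⟩
  rw [Finset.coe_image, ← map_span, hspan, hmap]

/-- `N ⊓ ker f` need not be finitely generated; the kernel components of the generators of `N`
span a finitely generated replacement. -/
theorem exists_fg_le_inf_ker_sup_eq (f : M →ₗ[R] P) {N S : Submodule R M} (hN : N.FG)
    (hSN : S ≤ N) (hmap : N.map f ≤ S.map f) :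
    ∃ N' : Submodule R M, N'.FG ∧ N' ≤ N ⊓ LinearMap.ker f ∧ N = S ⊔ N' := by
  classical
  obtain ⟨w, rfl⟩ := hN
  have hdecomp : ∀ m ∈ w, ∃ c ∈ S, m - c ∈ LinearMap.ker f := fun m hm => by
    obtain ⟨c, hc, hfc⟩ := hmap (mem_map_of_mem (subset_span hm))
    exact ⟨c, hc, by simp [hfc]⟩
  choose! c hcS hker using hdecomp
  refine ⟨span R ((w.image fun m => m - c m : Finset M) : Set M), ⟨_, rfl⟩, ?_, ?_⟩
  · rw [span_le, Finset.coe_image, Set.image_subset_iff]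
    exact fun m hm => ⟨sub_mem (subset_span hm) (hSN (hcS m hm)), hker m hm⟩
  · refine le_antisymm ?_ (sup_le hSN ?_)
    · rw [span_le]
      intro m hm
      rw [← add_sub_cancel (c m) m]
      exact add_mem (mem_sup_left (hcS m hm))
        (mem_sup_right (subset_span (Finset.mem_image_of_mem _ hm)))
    · rw [span_le, Finset.coe_image, Set.image_subset_iff]
      exact fun m hm => sub_mem (subset_span hm) (hSN (hcS m hm))

theorem FGSpanBound.of_map_of_inf_ker {L : Submodule R M} {a b : ℕ} (f : M →ₗ[R] P)
    (hmap : (L.map f).FGSpanBound b) (hker : (L ⊓ LinearMap.ker f).FGSpanBound a) :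
    L.FGSpanBound (b + a) := by
  classical
  intro N hNL hN
  obtain ⟨s, hs, hspan⟩ := hmap _ (map_mono hNL) (hN.map f)
  obtain ⟨t, hts, htN, htmap⟩ := exists_finset_card_le_map_span_eq f (hspan ▸ subset_span)
  obtain ⟨N', hN'fg, hN'le, hsup⟩ :=
    exists_fg_le_inf_ker_sup_eq f hN (span_le.2 htN) (by rw [htmap, hspan])
  obtain ⟨t', ht', rfl⟩ := hker N' (hN'le.trans (inf_le_inf_right _ hNL)) hN'fg
  refine ⟨t ∪ t', (Finset.card_union_le _ _).trans (by omega), ?_⟩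
  rw [Finset.coe_union, span_union, hsup]

theorem fgSpanBound_span_singleton {p : ℕ} (hR : (⊤ : Submodule R R).FGSpanBound p) (x : M) :
    (span R {x}).FGSpanBound p := by
  rw [LinearMap.span_singleton_eq_range, LinearMap.range_eq_map]
  exact hR.map _

theorem fgSpanBound_span_finset {p : ℕ} (hR : (⊤ : Submodule R R).FGSpanBound p) (t : Finset M) :
    (span R (t : Set M)).FGSpanBound (p * t.card) := by
  classical
  induction t using Finset.induction_on with
  | empty =>
    rintro N hN -
    refine ⟨∅, by simp, ?_⟩
    rw [Finset.coe_empty, span_empty] at hN ⊢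
    exact (le_bot_iff.1 hN).symm
  | @insert x t hx ih =>
    have hmap : (span R ((insert x t : Finset M) : Set M)).map (span R (t : Set M)).mkQ ≤
        span R {(span R (t : Set M)).mkQ x} := by
      rw [map_le_iff_le_comap, span_le, Finset.coe_insert, Set.insert_subset_iff]
      refine ⟨mem_span_singleton_self _, fun y hy => ?_⟩
      simp [(Quotient.mk_eq_zero _).2 (subset_span hy)]
    have hker : span R ((insert x t : Finset M) : Set M) ⊓
        LinearMap.ker (span R (t : Set M)).mkQ ≤ span R (t : Set M) := by
      rw [ker_mkQ]
      exact inf_le_right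
    rw [Finset.card_insert_of_notMem hx, mul_add_one, add_comm]
    exact FGSpanBound.of_map_of_inf_ker _
      ((fgSpanBound_span_singleton hR _).mono hmap) (ih.mono hker)

end Submodule

theorem stmt_0_general (R : Type*) [Ring R] (p : ℕ)
    (hR : ∀ I : Submodule R R, I.FG →
      ∃ s : Finset R, s.card ≤ p ∧ Submodule.span R (s : Set R) = I)
    (M : Type*) [AddCommGroup M] [Module R M] (g : ℕ)
    (sM : Finset M) (hcard : sM.card ≤ g) (hspan : Submodule.span R (sM : Set M) = ⊤)
    (N : Submodule R M) (hN : N.FG) :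
    ∃ s : Finset M, s.card ≤ p * g ∧ Submodule.span R (s : Set M) = N := by
  obtain ⟨s, hs, rfl⟩ :=
    Submodule.fgSpanBound_span_finset (fun I _ hI => hR I hI) sM N (hspan ▸ le_top) hN
  exact ⟨s, hs.trans (Nat.mul_le_mul_left p hcard), rfl⟩

/-- Levy's lemma: if every finitely generated left ideal of `R` is
`p`-generated, then every finitely generated submodule of a `g`-generated left
`R`-module is `p * g`-generated. -/
theorem stmt_0 (R : Type*) [Ring R] (p : ℕ) (hp : 0 < p)
    (hR : ∀ I : Submodule R R, I.FG →
      ∃ s : Finset R, s.card ≤ p ∧ Submodule.span R (s : Set R) = I)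
    (M : Type*) [AddCommGroup M] [Module R M] (g : ℕ)
    (sM : Finset M) (hcard : sM.card ≤ g) (hspan : Submodule.span R (sM : Set M) = ⊤)
    (N : Submodule R M) (hN : N.FG) :
    ∃ s : Finset M, s.card ≤ p * g ∧ Submodule.span R (s : Set M) = N :=
  stmt_0_general R p hR M g sM hcard hspan N hN
end

section
/- Let R be a ring, p a positive integer, and M a right R-module generated by p elements. Then M is flat if and only if for every p-generated left ideal A of R, the natural map M ⊗_R A → M ⊗_R R is injective. -/
open MulOpposite in
/-- A right `R`-module `M` (given as a left `Rᵐᵒᵖ`-module) is `(1,p)`-flat, i.e.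
for every left ideal `A` of `R` generated by at most `p` elements, the natural map
`M ⊗_R A → M ⊗_R R = M` is injective.  This is expressed by the standard
element-wise (equational) criterion: whenever `∑ yᵢ aᵢ = 0`, the element
`∑ yᵢ ⊗ aᵢ` is zero in `M ⊗_R A`, where `A` is the left ideal generated by the `aᵢ`. -/
def OnePFlat (R : Type*) [Ring R] (M : Type*) [AddCommGroup M] [Module Rᵐᵒᵖ M]
    (p : ℕ) : Prop :=
  ∀ (a : Fin p → R) (y : Fin p → M), (∑ i, op (a i) • y i) = 0 →
    ∃ (L : ℕ) (z : Fin L → M) (c : Fin L → Fin p → R),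
      (∀ l, ∑ i, c l i * a i = 0) ∧ ∀ i, y i = ∑ l, op (c l i) • z l

/-- A right `R`-module is flat iff `M ⊗_R A → M` is injective for every finitely
generated left ideal `A` (the ideal criterion for flatness), i.e. iff it is
`(1,q)`-flat for every `q`. -/
def RightFlat (R : Type*) [Ring R] (M : Type*) [AddCommGroup M] [Module Rᵐᵒᵖ M] : Prop :=
  ∀ q : ℕ, OnePFlat R M q

theorem Submodule.exists_fin_span_range_eq_top_of_card_le {S M : Type*} [Semiring S]
    [AddCommMonoid M] [Module S M] {s : Finset M} {p : ℕ}
    (hcard : s.card ≤ p) (hspan : Submodule.span S (s : Set M) = ⊤) :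
    ∃ m : Fin p → M, Submodule.span S (Set.range m) = ⊤ := by
  let g : Fin s.card → M := fun j => s.equivFin.symm j
  refine ⟨Function.extend (Fin.castLE hcard) g 0, eq_top_iff.mpr (hspan ▸ ?_)⟩
  refine Submodule.span_mono fun x hx => ⟨Fin.castLE hcard (s.equivFin ⟨x, hx⟩), ?_⟩
  simp [(Fin.castLE_injective hcard).extend_apply, g]

open MulOpposite in
theorem sum_op_smul_sum_op_smul {R M ι κ : Type*} [Semiring R] [AddCommMonoid M]
    [Module Rᵐᵒᵖ M] [Fintype ι] [Fintype κ] (a : ι → R) (b : κ → ι → R) (m : κ → M) :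
    ∑ i, op (a i) • ∑ j, op (b j i) • m j = ∑ j, op (∑ i, b j i * a i) • m j := by
  simp only [Finset.smul_sum, Finset.op_sum, Finset.sum_smul, op_mul, mul_smul]
  exact Finset.sum_comm

open MulOpposite in
/-- A relation `∑ yᵢ aᵢ = 0` is pushed down to the generators `m` by writing `yᵢ = ∑ⱼ mⱼ bⱼᵢ`;
a trivialization of the resulting relation `∑ mⱼ (∑ᵢ bⱼᵢ aᵢ) = 0` pulls back along `b`. -/
theorem rightFlat_of_span_range_eq_top {R M : Type*} [Ring R] [AddCommGroup M]
    [Module Rᵐᵒᵖ M] {n : ℕ} (m : Fin n → M)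
    (hm : Submodule.span Rᵐᵒᵖ (Set.range m) = ⊤) (hflat : OnePFlat R M n) :
    RightFlat R M := by
  intro q a y hy
  choose B hB using fun i =>
    (Submodule.mem_span_range_iff_exists_fun Rᵐᵒᵖ).mp (hm ▸ Submodule.mem_top (x := y i))
  set b : Fin n → Fin q → R := fun j i => unop (B i j)
  have hy_eq : ∀ i, y i = ∑ j, op (b j i) • m j := fun i => by simp [b, hB i]
  have hrel : ∑ j, op (∑ i, b j i * a i) • m j = 0 := by
    rw [← sum_op_smul_sum_op_smul, ← hy]
    simp only [hy_eq]
  obtain ⟨L, z, c, hc, hz⟩ := hflat _ m hrel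
  refine ⟨L, z, fun l i => ∑ j, c l j * b j i, fun l => ?_, fun i => ?_⟩
  · exact (Matrix.dotProduct_mulVec (c l) (Matrix.of b) a).symm.trans (hc l)
  · rw [hy_eq i, ← sum_op_smul_sum_op_smul]
    simp only [hz]

theorem stmt_3_general (R : Type*) [Ring R] (M : Type*) [AddCommGroup M] [Module Rᵐᵒᵖ M]
    (p : ℕ)
    (hgen : ∃ s : Finset M, s.card ≤ p ∧ Submodule.span Rᵐᵒᵖ (s : Set M) = ⊤) :
    RightFlat R M ↔ OnePFlat R M p := by
  obtain ⟨s, hcard, hspan⟩ := hgen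
  obtain ⟨m, hm⟩ := Submodule.exists_fin_span_range_eq_top_of_card_le hcard hspan
  exact ⟨fun h => h p, rightFlat_of_span_range_eq_top m hm⟩

/-- a right `R`-module generated by `p` elements is flat iff it is
`(1,p)`-flat. -/
theorem stmt_3 (R : Type*) [Ring R] (M : Type*) [AddCommGroup M] [Module Rᵐᵒᵖ M]
    (p : ℕ) (hp : 0 < p)
    (hgen : ∃ s : Finset M, s.card ≤ p ∧ Submodule.span Rᵐᵒᵖ (s : Set M) = ⊤) :
    RightFlat R M ↔ OnePFlat R M p :=
  stmt_3_general R M p hgen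
end

section
/- A ring R is right self (ℵ₀,1)-injective if and only if every finitely generated left ideal A of R satisfies A = l-ann(r-ann(A)), where r-ann denotes the right annihilator in R and l-ann the left annihilator. -/
/-- The right annihilator of a left ideal `A`, as a right ideal. -/
def rightAnn (R : Type*) [Ring R] (A : Submodule R R) : Submodule Rᵐᵒᵖ R where
  carrier := {x | ∀ a ∈ A, a * x = 0}
  add_mem' := by
    intro x y hx hy a ha
    rw [mul_add, hx a ha, hy a ha, add_zero]
  zero_mem' := by intro a _; rw [mul_zero]
  smul_mem' := by
    intro c x hx a ha
    rw [MulOpposite.smul_eq_mul_unop, ← mul_assoc, hx a ha, zero_mul]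

/-- The left annihilator of a right ideal `B`, as a left ideal of `R`. -/
def leftAnn (R : Type*) [Ring R] (B : Submodule Rᵐᵒᵖ R) : Submodule R R where
  carrier := {x | ∀ b ∈ B, x * b = 0}
  add_mem' := by
    intro x y hx hy b hb
    rw [add_mul, hx b hb, hy b hb, add_zero]
  zero_mem' := by intro b _; rw [zero_mul]
  smul_mem' := by
    intro c x hx b hb
    rw [smul_eq_mul, mul_assoc, hx b hb, mul_zero]

/-- `R` is right self `(ℵ₀,1)`-injective: for every `n ≥ 1` and every cyclic
submodule `K` of the free right `R`-module `Rⁿ`, every right `R`-module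
homomorphism `K → R` extends to `Rⁿ`.  Right modules are left `Rᵐᵒᵖ`-modules. -/
def RightSelfAleph0OneInjective (R : Type*) [Ring R] : Prop :=
  ∀ n : ℕ, 0 < n → ∀ x : Fin n → R,
    ∀ f : (Submodule.span Rᵐᵒᵖ {x} : Submodule Rᵐᵒᵖ (Fin n → R)) →ₗ[Rᵐᵒᵖ] R,
      ∃ g : (Fin n → R) →ₗ[Rᵐᵒᵖ] R,
        ∀ k : (Submodule.span Rᵐᵒᵖ {x} : Submodule Rᵐᵒᵖ (Fin n → R)), g k.1 = f k

/-! A right-module map from the cyclic submodule `xR` of `Rⁿ` to `R` is determined by the image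
`b` of `x`, and `b` is a possible image exactly when `r-ann(x) ⊆ r-ann(b)`, i.e. when `b` lies in
`l-ann(r-ann(A))` for the left ideal `A = Rx₁ + ⋯ + Rxₙ`. A map `Rⁿ → R` is left multiplication by
a row vector, so its values at `x` are exactly the elements of `A`. Hence every map `xR → R`
extends to `Rⁿ` iff `l-ann(r-ann(A)) ⊆ A`, and every finitely generated left ideal is such an `A`. -/

section CyclicHom

variable {S M N : Type*} [Ring S] [AddCommGroup M] [Module S M] [AddCommGroup N] [Module S N]

theorem exists_linearMap_span_singleton_apply_eq_iff (x : M) (y : N) :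
    (∃ f : (S ∙ x) →ₗ[S] N, f ⟨x, Submodule.mem_span_singleton_self x⟩ = y) ↔
      ∀ r : S, r • x = 0 → r • y = 0 := by
  constructor
  · rintro ⟨f, rfl⟩ r hr
    rw [← f.map_smul, show r • (⟨x, _⟩ : S ∙ x) = 0 from Subtype.ext hr, f.map_zero]
  · intro h
    let e := Ideal.quotTorsionOfEquivSpanSingleton S M x
    refine ⟨(Submodule.liftQ _ (LinearMap.toSpanSingleton S N y) fun r hr =>
      LinearMap.mem_ker.mpr (h r ((Ideal.mem_torsionOf_iff x r).mp hr))).comp e.symm.toLinearMap, ?_⟩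
    have he : e.symm ⟨x, Submodule.mem_span_singleton_self x⟩ = Submodule.Quotient.mk 1 :=
      (e.symm_apply_eq).mpr (by simp [e])
    rw [LinearMap.comp_apply, LinearEquiv.coe_toLinearMap, he, Submodule.liftQ_apply,
      LinearMap.toSpanSingleton_apply, one_smul]

theorem LinearMap.eq_on_span_singleton_iff (x : M) (f : (S ∙ x) →ₗ[S] N) (g : M →ₗ[S] N) :
    (∀ k : S ∙ x, g k = f k) ↔ g x = f ⟨x, Submodule.mem_span_singleton_self x⟩ := by
  refine ⟨fun h => h ⟨x, Submodule.mem_span_singleton_self x⟩, fun h k => ?_⟩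
  obtain ⟨a, ha⟩ := Submodule.mem_span_singleton.mp k.2
  obtain rfl : a • ⟨x, Submodule.mem_span_singleton_self x⟩ = k := Subtype.ext ha
  rw [Submodule.coe_smul, g.map_smul, f.map_smul, h]

end CyclicHom

theorem Submodule.FG.exists_fin_succ_span_range_eq {S M : Type*} [Semiring S] [AddCommMonoid M]
    [Module S M] {A : Submodule S M} (hA : A.FG) :
    ∃ (n : ℕ) (x : Fin (n + 1) → M), Submodule.span S (Set.range x) = A := by
  obtain ⟨n, x, rfl⟩ := Submodule.fg_iff_exists_fin_generating_family.mp hA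
  exact ⟨n, Fin.cons 0 x, by rw [Fin.range_cons, Submodule.span_insert_zero]⟩

section RowVectors

variable {R ι : Type*} [Ring R] [Fintype ι]

theorem LinearMap.apply_eq_sum_mul [DecidableEq ι] (g : (ι → R) →ₗ[Rᵐᵒᵖ] R) (y : ι → R) :
    g y = ∑ i, g (Pi.single i 1) * y i := by
  conv_lhs => rw [← Finset.univ_sum_single y]
  refine (map_sum g _ _).trans (Finset.sum_congr rfl fun i _ => ?_)
  rw [← op_smul_eq_mul, ← g.map_smul, ← Pi.single_smul, op_smul_eq_mul, one_mul]

theorem exists_linearMap_apply_eq_iff_mem_span (x : ι → R) (b : R) :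
    (∃ g : (ι → R) →ₗ[Rᵐᵒᵖ] R, g x = b) ↔ b ∈ Submodule.span R (Set.range x) := by
  classical
  rw [Submodule.mem_span_range_iff_exists_fun]
  constructor
  · rintro ⟨g, rfl⟩
    exact ⟨fun i => g (Pi.single i 1), (g.apply_eq_sum_mul x).symm⟩
  · rintro ⟨c, rfl⟩
    exact ⟨∑ i, (LinearMap.mulLeft Rᵐᵒᵖ (c i)).comp (LinearMap.proj i), by simp⟩

end RowVectors

section Annihilators

variable {R ι : Type*} [Ring R]

theorem le_leftAnn_rightAnn (A : Submodule R R) : A ≤ leftAnn R (rightAnn R A) :=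
  fun _ ha _ hb => hb _ ha

theorem op_smul_eq_zero_iff_mem_rightAnn (x : ι → R) (r : R) :
    MulOpposite.op r • x = 0 ↔ r ∈ rightAnn R (Submodule.span R (Set.range x)) := by
  refine ⟨fun h a ha => ?_, fun h => funext fun i => h (x i) (Submodule.subset_span ⟨i, rfl⟩)⟩
  induction ha using Submodule.span_induction with
  | mem a ha => obtain ⟨i, rfl⟩ := ha; exact congrFun h i
  | zero => exact zero_mul r
  | add a b _ _ ha hb => rw [add_mul, ha, hb, add_zero]
  | smul s a _ ha => rw [smul_eq_mul, mul_assoc, ha, mul_zero]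

theorem mem_leftAnn_rightAnn_span_range_iff (x : ι → R) (b : R) :
    b ∈ leftAnn R (rightAnn R (Submodule.span R (Set.range x))) ↔
      ∀ r : Rᵐᵒᵖ, r • x = 0 → r • b = 0 :=
  ⟨fun hb r hr => hb r.unop ((op_smul_eq_zero_iff_mem_rightAnn x r.unop).mp hr),
    fun hb r hr => hb (MulOpposite.op r) ((op_smul_eq_zero_iff_mem_rightAnn x r).mpr hr)⟩

end Annihilators

/-- `R` is right self `(ℵ₀,1)`-injective iff every finitely generated
left ideal `A` of `R` satisfies `A = l-ann(r-ann(A))`. -/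
theorem stmt_4 (R : Type*) [Ring R] :
    RightSelfAleph0OneInjective R ↔
      ∀ A : Submodule R R, A.FG → leftAnn R (rightAnn R A) = A := by
  constructor
  · intro hinj A hA
    obtain ⟨n, x, rfl⟩ := hA.exists_fin_succ_span_range_eq
    refine le_antisymm (fun b hb => ?_) (le_leftAnn_rightAnn _)
    obtain ⟨f, hf⟩ := (exists_linearMap_span_singleton_apply_eq_iff x b).mpr
      ((mem_leftAnn_rightAnn_span_range_iff x b).mp hb)
    obtain ⟨g, hg⟩ := hinj (n + 1) n.succ_pos x f
    exact (exists_linearMap_apply_eq_iff_mem_span x b).mp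
      ⟨g, ((LinearMap.eq_on_span_singleton_iff x f g).mp hg).trans hf⟩
  · intro h n _ x f
    have hfx := (mem_leftAnn_rightAnn_span_range_iff x _).mpr
      ((exists_linearMap_span_singleton_apply_eq_iff x _).mp ⟨f, rfl⟩)
    rw [h _ (Submodule.fg_span (Set.finite_range x))] at hfx
    obtain ⟨g, hg⟩ := (exists_linearMap_apply_eq_iff_mem_span x _).mpr hfx
    exact ⟨g, (LinearMap.eq_on_span_singleton_iff x f g).mpr hg⟩
end

section
/- Let R be a quasi-Frobenius ring. Then a right R-module M is flat if and only if for every principal left ideal Ra, the natural map M ⊗_R Ra → M is injective. -/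
open MulOpposite Submodule

/-!
A relation `∑ yⱼ aⱼ = 0` in `M` is shown to be trivial by Artinian induction on the left ideal
`N = ∑ R aⱼ`. Pick `N' ⋖ N` (Hopkins–Levitzki makes `R` Noetherian) and `a₀ := a_{j₀} ∉ N'`.
Self-injectivity on both sides gives `l(r(D)) = D` for finitely generated left ideals and
hence some `w` with `N' w = 0` and `t := a₀ w ≠ 0`; since `N / N'` is simple, `c t = 0` forces
`c a₀ ∈ N'`. Writing `aⱼ ≡ sⱼ a₀ (mod N')`, the element `Y = ∑ yⱼ sⱼ` satisfies `Y t = 0`, so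
`(1,1)`-flatness gives `Y = ∑ z_l c_l` with `c_l t = 0`. In terms of `z_l` and `yⱼ` the relation
is then rewritten with the coefficients `c_l a₀` and `aⱼ - sⱼ a₀`, which lie in `N'`.
-/

theorem Module.Injective.exists_comp_eq_of_ker_le {A P P' : Type*} [Ring A]
    [Module.Injective A A] [AddCommGroup P] [Module A P] [AddCommGroup P'] [Module A P']
    (π : P →ₗ[A] P') (φ : P →ₗ[A] A) (h : LinearMap.ker π ≤ LinearMap.ker φ) :
    ∃ H : P' →ₗ[A] A, H ∘ₗ π = φ := by
  obtain ⟨H, hH⟩ := Module.Injective.extension_property A A _ _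
    ((LinearMap.ker π).liftQ π le_rfl)
    (LinearMap.ker_eq_bot.1 (ker_liftQ_eq_bot _ _ _ le_rfl)) ((LinearMap.ker π).liftQ φ h)
  exact ⟨H, LinearMap.ext fun x => LinearMap.congr_fun hH (Submodule.Quotient.mk x)⟩

theorem exists_eq_sum_mul_of_forall_mul_eq_zero {A ι : Type*} [Ring A] [Module.Injective A A]
    [Fintype ι] (d : ι → A) {x : A} (h : ∀ c, (∀ j, c * d j = 0) → c * x = 0) :
    ∃ u : ι → A, x = ∑ j, d j * u j := by
  classical
  obtain ⟨H, hH⟩ := Module.Injective.exists_comp_eq_of_ker_le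
    (LinearMap.pi fun j => LinearMap.toSpanSingleton A A (d j))
    (LinearMap.toSpanSingleton A A x) fun c hc => h c fun j => congr_fun hc j
  refine ⟨fun j => H fun k => if j = k then 1 else 0, ?_⟩
  have hd : (LinearMap.pi fun j => LinearMap.toSpanSingleton A A (d j)) 1 = d := by
    ext j
    simp
  have hx : H d = x := by simpa [hd] using LinearMap.congr_fun hH 1
  rw [← hx, LinearMap.pi_apply_eq_sum_univ]
  rfl

section LeftIdeals

variable {R : Type*} [Ring R]

theorem Submodule.FG.mem_of_forall_mul_eq_zero [Module.Injective Rᵐᵒᵖ Rᵐᵒᵖ] {D : Submodule R R}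
    (hD : D.FG) {x : R} (h : ∀ c, (∀ d ∈ D, d * c = 0) → x * c = 0) : x ∈ D := by
  classical
  obtain ⟨F, rfl⟩ := hD
  obtain ⟨u, hu⟩ := exists_eq_sum_mul_of_forall_mul_eq_zero (fun d : F => op (d : R)) (x := op x)
    fun c hc => by
      have hF : span R F ≤ LinearMap.ker (LinearMap.toSpanSingleton R R (unop c)) :=
        span_le.2 fun d hd => by simpa using congr_arg unop (hc ⟨d, hd⟩)
      simpa using congr_arg op (h (unop c) fun d hd => by simpa using hF hd)
  have hx : x = ∑ d : F, unop (u d) * d := by simpa using congr_arg unop hu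
  rw [hx]
  exact sum_mem fun d _ => smul_mem _ _ (subset_span d.2)

theorem Submodule.exists_ne_zero_forall_mul_eq_zero [IsNoetherian R R] [Module.Injective Rᵐᵒᵖ Rᵐᵒᵖ]
    {D : Submodule R R} (hD : D ≠ ⊤) : ∃ g ≠ 0, ∀ r ∈ D, r * g = 0 := by
  by_contra! H
  refine hD ((Ideal.eq_top_iff_one D).2 ((IsNoetherian.noetherian D).mem_of_forall_mul_eq_zero
    fun c hc => ?_))
  by_contra hc0
  obtain ⟨r, hr, hrc⟩ := H c (by simpa using hc0)
  exact hrc (hc r hr)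

theorem Submodule.exists_mul_eq_zero_of_notMem [IsNoetherian R R] [Module.Injective R R]
    [Module.Injective Rᵐᵒᵖ Rᵐᵒᵖ] {N : Submodule R R} {v : R} (hv : v ∉ N) :
    ∃ w, (∀ u ∈ N, u * w = 0) ∧ v * w ≠ 0 := by
  obtain ⟨g, hg, hgN⟩ := exists_ne_zero_forall_mul_eq_zero
    (D := N.comap (LinearMap.toSpanSingleton R R v))
    fun h => hv (by simpa using h.ge (mem_top (x := 1)))
  obtain ⟨H, hH⟩ := Module.Injective.exists_comp_eq_of_ker_le
    (N.subtype.coprod (LinearMap.toSpanSingleton R R v))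
    (LinearMap.toSpanSingleton R R g ∘ₗ LinearMap.snd R N R) <| by
      rintro ⟨n, r⟩ h
      simp only [LinearMap.mem_ker, LinearMap.coprod_apply, subtype_apply,
        LinearMap.toSpanSingleton_apply, smul_eq_mul] at h
      simp [hgN r (by simp [eq_neg_of_add_eq_zero_right h])]
  have hmul : ∀ x, H x = x * H 1 := fun x => by simpa using H.map_smul x 1
  refine ⟨H 1, fun u hu => ?_, ?_⟩
  · rw [← hmul]
    simpa using LinearMap.congr_fun hH (⟨u, hu⟩, 0)
  · rw [← hmul, show H v = g by simpa using LinearMap.congr_fun hH (0, 1)]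
    exact hg

theorem Submodule.exists_sub_smul_mem_of_covBy {M : Type*} [AddCommGroup M] [Module R M]
    {N' N : Submodule R M} (h : N' ⋖ N) {v x : M} (hv : v ∈ N) (hv' : v ∉ N') (hx : x ∈ N) :
    ∃ s : R, x - s • v ∈ N' := by
  have hsup : N' ⊔ span R {v} = N :=
    (h.eq_or_eq le_sup_left (sup_le h.le ((span_singleton_le_iff_mem _ _).2 hv))).resolve_left
      fun e => hv' (e ▸ mem_sup_right (mem_span_singleton_self v))
  rw [← hsup, mem_sup] at hx
  obtain ⟨y, hy, _, hz, rfl⟩ := hx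
  obtain ⟨s, rfl⟩ := mem_span_singleton.1 hz
  exact ⟨s, by simpa using hy⟩

theorem Submodule.mul_mem_of_covBy {N' N : Submodule R R} (h : N' ⋖ N) {v w c : R} (hv : v ∈ N)
    (hw : ∀ u ∈ N', u * w = 0) (hvw : v * w ≠ 0) (hc : c * (v * w) = 0) :
    c * v ∈ N' := by
  by_contra hcv
  obtain ⟨s, hs⟩ := exists_sub_smul_mem_of_covBy h (N.smul_mem c hv) hcv hv
  apply hvw
  simpa [sub_mul, mul_assoc, hc] using hw _ hs

end LeftIdeals

section Relations

variable {R : Type*} [Ring R] {M : Type*} [AddCommGroup M] [Module Rᵐᵒᵖ M]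

/-- `OnePFlat R M p` says exactly that every relation `∑ i, y i * a i = 0` in `M` with `p` terms
is trivial in this sense. -/
def IsRightTrivialRelation {ι : Type*} [Fintype ι] (a : ι → R) (y : ι → M) : Prop :=
  ∃ (L : ℕ) (z : Fin L → M) (c : Fin L → ι → R),
    (∀ l, ∑ i, c l i * a i = 0) ∧ ∀ i, y i = ∑ l, op (c l i) • z l

section

variable {ι κ : Type*} [Fintype ι] [Fintype κ]

theorem isRightTrivialRelation_of_forall_eq_zero {a : ι → R} (ha : ∀ i, a i = 0) (y : ι → M) :
    IsRightTrivialRelation a y := by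
  let e := Fintype.equivFin ι
  exact ⟨Fintype.card ι, y ∘ e.symm, fun l i => if e i = l then 1 else 0, fun l => by simp [ha],
    fun i => by simp [apply_ite op, ite_smul]⟩

theorem sum_op_sum_mul_smul (C : κ → ι → R) (a : ι → R) (Z : κ → M) :
    ∑ ℓ, op (∑ j, C ℓ j * a j) • Z ℓ = ∑ j, op (a j) • ∑ ℓ, op (C ℓ j) • Z ℓ := by
  simp_rw [Finset.op_sum, Finset.sum_smul, op_mul, mul_smul, Finset.smul_sum]
  exact Finset.sum_comm

theorem IsRightTrivialRelation.of_comp {a : ι → R} {y : ι → M} (C : κ → ι → R) (Z : κ → M)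
    (h : IsRightTrivialRelation (fun ℓ => ∑ j, C ℓ j * a j) Z)
    (hy : ∀ j, y j = ∑ ℓ, op (C ℓ j) • Z ℓ) : IsRightTrivialRelation a y := by
  obtain ⟨L, x, e, he, hZ⟩ := h
  refine ⟨L, x, fun m j => ∑ ℓ, e m ℓ * C ℓ j, fun m => ?_, fun j => ?_⟩
  · simp_rw [Finset.sum_mul, mul_assoc]
    rw [Finset.sum_comm]
    simp_rw [← Finset.mul_sum]
    exact he m
  · simp_rw [hy j, hZ, Finset.smul_sum, smul_smul, ← op_mul]
    rw [Finset.sum_comm]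
    simp_rw [← Finset.sum_smul, ← Finset.op_sum]

end

theorem OnePFlat.exists_comp_mem (hM : OnePFlat R M 1) {ι : Type} [Fintype ι]
    {a : ι → R} {y : ι → M} (hy : ∑ i, op (a i) • y i = 0) {N : Submodule R R} {w : R}
    (hw : ∀ u ∈ N, u * w = 0) (j₀ : ι) (s : ι → R) (hs : ∀ j, a j - s j * a j₀ ∈ N)
    (hann : ∀ c, c * (a j₀ * w) = 0 → c * a j₀ ∈ N) :
    ∃ (κ : Type) (_ : Fintype κ) (C : κ → ι → R) (Z : κ → M),
      (∀ ℓ, ∑ j, C ℓ j * a j ∈ N) ∧ ∀ j, y j = ∑ ℓ, op (C ℓ j) • Z ℓ := by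
  classical
  set Y := ∑ j, op (s j) • y j with hYdef
  have hsw : ∀ j, s j * (a j₀ * w) = a j * w := fun j => by
    rw [← mul_assoc, eq_comm, ← sub_eq_zero, ← sub_mul]
    exact hw _ (hs j)
  have hY : op (a j₀ * w) • Y = 0 := by
    calc op (a j₀ * w) • Y = op w • ∑ j, op (a j) • y j := by
          simp_rw [hYdef, Finset.smul_sum, smul_smul, ← op_mul, hsw]
      _ = 0 := by rw [hy, smul_zero]
  obtain ⟨L, z, c, hc, hYz⟩ := hM (fun _ => a j₀ * w) (fun _ => Y) (by simpa using hY)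
  -- `y j₀ = (y j₀ - Y) + ∑ z_l c_l`; the new coefficients are `c_l a j₀` and `a j - s j a j₀`.
  refine ⟨Fin L ⊕ ι, inferInstance,
    Sum.elim (fun l => Pi.single j₀ (c l 0)) (fun j' => Pi.single j' 1 - Pi.single j₀ (s j')),
    Sum.elim z y, ?_, fun j => ?_⟩
  · rintro (l | j')
    · simpa [Pi.single_apply] using hann _ (by simpa using hc l)
    · simpa [Pi.single_apply, sub_mul, Finset.sum_sub_distrib] using hs j'
  · rcases eq_or_ne j j₀ with rfl | hj
    · simp [Fintype.sum_sum_type, Pi.single_apply, ← hYz 0, hYdef, sub_smul,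
        Finset.sum_sub_distrib, apply_ite op, ite_smul]
    · simp [Fintype.sum_sum_type, Pi.single_apply, hj, apply_ite op, ite_smul]

theorem OnePFlat.isRightTrivialRelation [IsArtinian R R] [Module.Injective R R]
    [Module.Injective Rᵐᵒᵖ Rᵐᵒᵖ] (hM : OnePFlat R M 1) {ι : Type} [Fintype ι] (a : ι → R)
    (y : ι → M) (hy : ∑ i, op (a i) • y i = 0) : IsRightTrivialRelation a y := by
  suffices key : ∀ N : Submodule R R, ∀ (ι : Type) [Fintype ι] (a : ι → R) (y : ι → M),
      span R (Set.range a) = N → ∑ i, op (a i) • y i = 0 → IsRightTrivialRelation a y from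
    key _ ι a y rfl hy
  intro N
  induction N using WellFoundedLT.induction with
  | ind N IH =>
  intro ι _ a y hN hy
  have ha : ∀ j, a j ∈ N := fun j => hN ▸ subset_span (Set.mem_range_self j)
  rcases eq_or_ne N ⊥ with rfl | hN0
  · exact isRightTrivialRelation_of_forall_eq_zero (fun j => (mem_bot R).1 (ha j)) y
  obtain ⟨N', -, hN'⟩ := exists_le_covBy_of_lt hN0.bot_lt
  obtain ⟨j₀, hj₀⟩ : ∃ j, a j ∉ N' := by
    by_contra! h
    exact hN'.lt.not_ge (hN ▸ span_le.2 (Set.range_subset_iff.2 h))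
  obtain ⟨w, hw, hj₀w⟩ := exists_mul_eq_zero_of_notMem hj₀
  choose s hs using fun j => exists_sub_smul_mem_of_covBy hN' (ha j₀) hj₀ (ha j)
  obtain ⟨κ, _, C, Z, hC, hyC⟩ := hM.exists_comp_mem hy hw j₀ s hs
    fun c hc => mul_mem_of_covBy hN' (ha j₀) hw hj₀w hc
  refine (IH _ ((span_le.2 (Set.range_subset_iff.2 hC)).trans_lt hN'.lt) κ _ Z rfl ?_).of_comp
    C Z hyC
  rw [sum_op_sum_mul_smul, ← hy]
  simp_rw [← hyC]

end Relations

open MulOpposite in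
theorem stmt_9_general (R : Type*) [Ring R]
    [IsArtinian R R]
    [Module.Injective R R] [Module.Injective Rᵐᵒᵖ Rᵐᵒᵖ]
    (M : Type*) [AddCommGroup M] [Module Rᵐᵒᵖ M] :
    RightFlat R M ↔ OnePFlat R M 1 :=
  ⟨fun h => h 1, fun h _ a y hy => h.isRightTrivialRelation a y hy⟩

/-- over a quasi-Frobenius ring (two-sided Artinian and two-sided
self-injective), a right `R`-module `M` is flat iff for every principal left ideal
`Ra` the natural map `M ⊗_R Ra → M` is injective, i.e. iff `M` is `(1,1)`-flat. -/
theorem stmt_9 (R : Type*) [Ring R]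
    [IsArtinian R R] [IsArtinian Rᵐᵒᵖ Rᵐᵒᵖ]
    [Module.Injective R R] [Module.Injective Rᵐᵒᵖ Rᵐᵒᵖ]
    (M : Type*) [AddCommGroup M] [Module Rᵐᵒᵖ M] :
    RightFlat R M ↔ OnePFlat R M 1 :=
  stmt_9_general R M
end

section
/- Let R be a commutative local ring with maximal ideal P satisfying P² = 0, and let q be a positive integer. Then every (1,q)-injective R-module is (n,q)-injective for all positive integers n. -/
/-- An `R`-module `M` is `(n,q)`-injective if for every submodule `K` of the free
module `Rⁿ` generated by at most `q` elements, every homomorphism `K → M` extends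
to `Rⁿ`. -/
def NQInjective (R : Type*) [Ring R] (M : Type*) [AddCommGroup M] [Module R M]
    (n q : ℕ) : Prop :=
  ∀ K : Submodule R (Fin n → R),
    (∃ s : Finset (Fin n → R), s.card ≤ q ∧ Submodule.span R (s : Set (Fin n → R)) = K) →
    ∀ f : K →ₗ[R] M, ∃ g : (Fin n → R) →ₗ[R] M, ∀ x : K, g x.1 = f x

/-!
Let `P` be the maximal ideal. For a submodule `K ≤ Rⁿ⁺¹` there is a coordinate `i` such that
`K ∩ ker πᵢ` needs no more generators than `K`: if some element of `K` has a unit `i`-th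
coordinate, `K ∩ ker πᵢ` is the image of `K` under the projection along that element;
otherwise all coordinates of elements of `K` lie in `P`, so `P K = 0` as `P² = 0`, and `K` is
a vector space over `R / P` whose subspaces have smaller dimension. Splitting
`Rⁿ⁺¹ = R × Rⁿ` along that coordinate, a map `K → M` is first extended from `K ∩ Rⁿ` by
induction; the difference then vanishes on `K ∩ Rⁿ`, so it factors through the ideal `πᵢ K`,
where `(1,q)`-injectivity extends it.
-/

open Submodule IsLocalRing Module

theorem LinearMap.exists_comp_eq_of_surjective_of_ker_le {R M N P : Type*} [Ring R]
    [AddCommGroup M] [AddCommGroup N] [AddCommGroup P] [Module R M] [Module R N] [Module R P]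
    {f : M →ₗ[R] N} (hf : Function.Surjective f) {h : M →ₗ[R] P} (hker : ker f ≤ ker h) :
    ∃ g : N →ₗ[R] P, g ∘ₗ f = h :=
  ⟨(ker f).liftQ h hker ∘ₗ (f.quotKerEquivOfSurjective hf).symm.toLinearMap, by
    ext x
    rw [comp_apply, comp_apply,
      show f x = f.quotKerEquivOfSurjective hf (Submodule.Quotient.mk x) from rfl,
      LinearEquiv.coe_toLinearMap, LinearEquiv.symm_apply_apply, liftQ_apply]⟩

namespace Submodule

section Extendable

variable {R V V' U W : Type*} (M : Type*) [Ring R] [AddCommGroup V] [Module R V]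
  [AddCommGroup V'] [Module R V'] [AddCommGroup U] [Module R U] [AddCommGroup W] [Module R W]
  [AddCommGroup M] [Module R M]

def Extendable (K : Submodule R V) : Prop :=
  ∀ f : K →ₗ[R] M, ∃ g : V →ₗ[R] M, g ∘ₗ K.subtype = f

variable {M}

theorem Extendable.of_map_equiv {K : Submodule R V} (e : V ≃ₗ[R] V')
    (h : (K.map (e : V →ₗ[R] V')).Extendable M) : K.Extendable M := by
  intro f
  obtain ⟨g, hg⟩ := h (f ∘ₗ (e.submoduleMap K).symm.toLinearMap)
  refine ⟨g ∘ₗ e.toLinearMap, LinearMap.ext fun x => ?_⟩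
  simpa using congr($hg (e.submoduleMap K x))

theorem Extendable.of_map_fst_of_comap_inr {K : Submodule R (U × W)}
    (hU : (K.map (LinearMap.fst R U W)).Extendable M)
    (hW : (K.comap (LinearMap.inr R U W)).Extendable M) : K.Extendable M := by
  intro f
  obtain ⟨g₀, hg₀⟩ := hW (f ∘ₗ (LinearMap.inr R U W).restrict fun _ hx => hx)
  set h := f - g₀ ∘ₗ LinearMap.snd R U W ∘ₗ K.subtype
  have hker : LinearMap.ker ((LinearMap.fst R U W).submoduleMap K) ≤ LinearMap.ker h := by
    rintro ⟨⟨u, w⟩, hx⟩ hu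
    obtain rfl : u = 0 := congr(Subtype.val $hu)
    have hw : g₀ w = f ⟨(0, w), hx⟩ := congr($hg₀ ⟨w, hx⟩)
    simp [h, hw]
  obtain ⟨f₁, hf₁⟩ := LinearMap.exists_comp_eq_of_surjective_of_ker_le
    ((LinearMap.fst R U W).submoduleMap_surjective K) hker
  obtain ⟨g₁, hg₁⟩ := hU f₁
  refine ⟨g₁ ∘ₗ LinearMap.fst R U W + g₀ ∘ₗ LinearMap.snd R U W, LinearMap.ext fun x => ?_⟩
  have hx₁ : g₁ x.1.1 = f x - g₀ x.1.2 :=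
    congr($hg₁ ((LinearMap.fst R U W).submoduleMap K x)).trans congr($hf₁ x)
  simp [hx₁]

end Extendable

theorem spanRank_le_natCast_iff {R V : Type*} [Semiring R] [AddCommMonoid V] [Module R V]
    {K : Submodule R V} {q : ℕ} :
    K.spanRank ≤ q ↔ ∃ s : Finset V, s.card ≤ q ∧ span R (s : Set V) = K := by
  rw [FG.spanRank_le_iff_exists_span_set_card_le]
  constructor
  · rintro ⟨s, hs, rfl⟩
    have hfin : s.Finite :=
      Cardinal.lt_aleph0_iff_set_finite.mp (hs.trans_lt Cardinal.natCast_lt_aleph0)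
    rw [← hfin.coe_toFinset, Finset.coe_sort_coe, Cardinal.mk_coe_finset, Nat.cast_le] at hs
    exact ⟨hfin.toFinset, hs, by simp⟩
  · rintro ⟨s, hs, rfl⟩
    exact ⟨s, by simpa using hs, rfl⟩

theorem spanRank_mono {K V : Type*} [DivisionRing K] [AddCommGroup V] [Module K V]
    {p p' : Submodule K V} (h : p ≤ p') : p.spanRank ≤ p'.spanRank := by
  rw [← spanRank_top p, ← spanRank_top p', ← rank_eq_spanRank_of_free,
    ← rank_eq_spanRank_of_free]
  exact Submodule.rank_mono h

section CommRing

variable {R V : Type*} [CommRing R] [AddCommGroup V] [Module R V]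

theorem spanRank_mono_of_isTorsionBySet {I : Ideal R} [I.IsMaximal] (hV : IsTorsionBySet R V I)
    {p p' : Submodule R V} (h : p ≤ p') : p.spanRank ≤ p'.spanRank := by
  let _ := Ideal.Quotient.field I
  let _ := hV.module
  have hsurj : Function.Surjective (algebraMap R (R ⧸ I)) := Ideal.Quotient.mk_surjective
  have hspan (p : Submodule R V) : (span (R ⧸ I) (p : Set V)).restrictScalars R = p := by
    rw [restrictScalars_span R _ hsurj, span_eq]
  rw [← hspan p, ← hspan p', spanRank_restrictScalars_eq hsurj, spanRank_restrictScalars_eq hsurj]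
  exact spanRank_mono (span_mono h)

theorem spanRank_le_of_le_of_isTorsionBySet {I : Ideal R} [I.IsMaximal] {L K : Submodule R V}
    (hK : IsTorsionBySet R K I) (h : L ≤ K) : L.spanRank ≤ K.spanRank :=
  calc L.spanRank = ((L.comap K.subtype).map K.subtype).spanRank := by
        rw [map_comap_subtype, inf_eq_right.2 h]
    _ ≤ (L.comap K.subtype).spanRank := spanRank_map_le _ _
    _ ≤ (⊤ : Submodule R K).spanRank := spanRank_mono_of_isTorsionBySet hK le_top
    _ = K.spanRank := spanRank_top K

end CommRing

variable {R V U W : Type*} [Ring R] [AddCommGroup V] [Module R V] [AddCommGroup U] [Module R U]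
  [AddCommGroup W] [Module R W]

theorem inf_ker_eq_map_of_mem_of_apply_eq_one {K : Submodule R V} {π : V →ₗ[R] R} {e : V}
    (he : e ∈ K) (hπe : π e = 1) :
    K ⊓ LinearMap.ker π = K.map (LinearMap.id - π.smulRight e) := by
  apply le_antisymm
  · rintro x ⟨hxK, hx⟩
    refine ⟨x, hxK, ?_⟩
    simp_all
  · rintro _ ⟨x, hx, rfl⟩
    refine ⟨K.sub_mem hx (K.smul_mem _ he), ?_⟩
    simp [hπe]

theorem comap_inr_map_equiv (K : Submodule R V) (e : V ≃ₗ[R] U × W) :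
    (K.map (e : V →ₗ[R] U × W)).comap (LinearMap.inr R U W) =
      (K ⊓ LinearMap.ker (LinearMap.fst R U W ∘ₗ e)).map (LinearMap.snd R U W ∘ₗ e) := by
  ext w
  constructor
  · rintro ⟨x, hx, hxw⟩
    rw [LinearEquiv.coe_coe] at hxw
    refine ⟨x, ⟨hx, ?_⟩, ?_⟩ <;> simp [hxw]
  · rintro ⟨x, ⟨hx, hx0⟩, rfl⟩
    refine ⟨x, hx, Prod.ext ?_ rfl⟩
    simpa using hx0

end Submodule

theorem IsLocalRing.exists_spanRank_inf_ker_proj_le {R ι : Type*} [CommRing R] [IsLocalRing R]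
    (hP2 : maximalIdeal R ^ 2 = ⊥) [Nonempty ι] (K : Submodule R (ι → R)) :
    ∃ i, (K ⊓ LinearMap.ker (LinearMap.proj i)).spanRank ≤ K.spanRank := by
  by_cases hunit : ∃ x ∈ K, ∃ i, IsUnit (x i)
  · obtain ⟨x, hx, i, hu⟩ := hunit
    refine ⟨i, ?_⟩
    rw [inf_ker_eq_map_of_mem_of_apply_eq_one (K.smul_mem (↑hu.unit⁻¹ : R) hx) (by simp)]
    exact spanRank_map_le _ _
  · push Not at hunit
    have htors : IsTorsionBySet R K (maximalIdeal R) := by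
      rintro ⟨x, hx⟩ ⟨a, ha⟩
      ext i
      have : a * x i ∈ maximalIdeal R ^ 2 :=
        pow_two (maximalIdeal R) ▸ Ideal.mul_mem_mul ha (hunit x hx i)
      simpa [hP2] using this
    exact ⟨Classical.arbitrary ι, spanRank_le_of_le_of_isTorsionBySet htors inf_le_left⟩

theorem nqInjective_iff {R M : Type*} [Ring R] [AddCommGroup M] [Module R M] {n q : ℕ} :
    NQInjective R M n q ↔ ∀ K : Submodule R (Fin n → R), K.spanRank ≤ q → K.Extendable M := by
  simp only [NQInjective, Extendable, spanRank_le_natCast_iff, LinearMap.ext_iff]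
  rfl

namespace NQInjective

variable {R M : Type*} [CommRing R] [AddCommGroup M] [Module R M] {n q : ℕ}

theorem extendable_of_spanRank_le (hM : NQInjective R M 1 q) {I : Ideal R}
    (hI : I.spanRank ≤ q) : I.Extendable M :=
  Extendable.of_map_equiv (LinearEquiv.funUnique (Fin 1) R R).symm
    (nqInjective_iff.1 hM _ ((spanRank_map_le _ _).trans hI))

theorem succ_succ [IsLocalRing R] (hP2 : maximalIdeal R ^ 2 = ⊥) (hM : NQInjective R M 1 q)
    (hn : NQInjective R M (n + 1) q) : NQInjective R M (n + 2) q := by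
  rw [nqInjective_iff] at hn ⊢
  intro K hK
  obtain ⟨i, hi⟩ := exists_spanRank_inf_ker_proj_le hP2 K
  let e : (Fin (n + 2) → R) ≃ₗ[R] R × (Fin (n + 1) → R) :=
    (LinearEquiv.funCongrLeft R R (Equiv.swap 0 i)).trans (Fin.consLinearEquiv R _).symm
  have he : LinearMap.fst R _ _ ∘ₗ e.toLinearMap = LinearMap.proj i := by
    ext; simp [e]
  refine Extendable.of_map_equiv e (Extendable.of_map_fst_of_comap_inr ?_ ?_)
  · exact hM.extendable_of_spanRank_le
      ((spanRank_map_le _ _).trans ((spanRank_map_le _ _).trans hK))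
  · rw [comap_inr_map_equiv, he]
    exact hn _ ((spanRank_map_le _ _).trans (hi.trans hK))

end NQInjective

theorem stmt_11_general (R : Type*) [CommRing R] [IsLocalRing R]
    (hP2 : IsLocalRing.maximalIdeal R ^ 2 = ⊥) (q : ℕ)
    (M : Type*) [AddCommGroup M] [Module R M]
    (hM : NQInjective R M 1 q) :
    ∀ n : ℕ, 0 < n → NQInjective R M n q := by
  have hsucc : ∀ n, NQInjective R M (n + 1) q := fun n => by
    induction n with
    | zero => exact hM
    | succ n ih => exact hM.succ_succ hP2 ih
  intro n hn
  obtain ⟨m, rfl⟩ := Nat.exists_eq_add_one_of_ne_zero hn.ne'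
  exact hsucc m

/-- over a commutative local ring whose maximal ideal `P` satisfies
`P² = 0`, every `(1,q)`-injective module is `(n,q)`-injective for all `n > 0`. -/
theorem stmt_11 (R : Type*) [CommRing R] [IsLocalRing R]
    (hP2 : IsLocalRing.maximalIdeal R ^ 2 = ⊥) (q : ℕ) (hq : 0 < q)
    (M : Type*) [AddCommGroup M] [Module R M]
    (hM : NQInjective R M 1 q) :
    ∀ n : ℕ, 0 < n → NQInjective R M n q :=
  stmt_11_general R hP2 q M hM
end

section
/- Let R be a commutative local ring with maximal ideal P satisfying P² = 0, and let q be a positive integer. Then every (1,q)-flat R-module is (n,q)-flat for all positive integers n. -/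
/-- An `R`-module `M` is `(n,q)`-flat if for every submodule `K` of the free
module `Rⁿ` generated by at most `q` elements, the natural map
`M ⊗[R] K → M ⊗[R] Rⁿ` is injective. -/
def NQFlat (R : Type*) [CommRing R] (M : Type*) [AddCommGroup M] [Module R M]
    (n q : ℕ) : Prop :=
  ∀ K : Submodule R (Fin n → R),
    (∃ s : Finset (Fin n → R), s.card ≤ q ∧ Submodule.span R (s : Set (Fin n → R)) = K) →
    Function.Injective (LinearMap.lTensor M K.subtype)

/-!
Induct on `n`. Let `K ⊆ Rⁿ⁺¹` be spanned by at most `q` vectors.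

If some generator `v` has a unit coordinate `vᵢ`, then `x ↦ (xᵢ / vᵢ) • v` is an idempotent
whose image `Rv ⊆ K` is a direct summand of `Rⁿ⁺¹`; the complementary part of `K` has vanishing
`i`-th coordinate, so deleting that coordinate embeds it into `Rⁿ`, where induction applies.

Otherwise every coordinate of `K` lies in `P`, so `P² = 0` makes `K`, its image in `R` (first
coordinate) and its image in `Rⁿ` (the other coordinates) into `R/P`-vector spaces. The embedding
of `K` into the product of the two images therefore splits, and `(1,q)`- and `(n,q)`-flatness
handle the two factors.
-/

open LinearMap TensorProduct Function

section

variable {R : Type*} [CommRing R] {M : Type*} [AddCommGroup M] [Module R M]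

namespace LinearMap

variable {A B A' B' : Type*} [AddCommGroup A] [Module R A] [AddCommGroup B] [Module R B]
  [AddCommGroup A'] [Module R A'] [AddCommGroup B'] [Module R B']

theorem lTensor_injective_of_comp_eq {j : A →ₗ[R] B} {j' : A' →ₗ[R] B'} (p : A →ₗ[R] A')
    (b : B →ₗ[R] B') (h : j' ∘ₗ p = b ∘ₗ j) (hp : Injective (lTensor M p))
    (hj' : Injective (lTensor M j')) : Injective (lTensor M j) := by
  have : Injective (lTensor M b ∘ lTensor M j) := by
    rw [← coe_comp, ← lTensor_comp, ← h, lTensor_comp, coe_comp]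
    exact hj'.comp hp
  exact this.of_comp

theorem lTensor_injective_of_leftInverse {f : A →ₗ[R] B} (g : B →ₗ[R] A)
    (h : g ∘ₗ f = id) : Injective (lTensor M f) :=
  HasLeftInverse.injective ⟨lTensor M g, fun x => by
    rw [← comp_apply, ← lTensor_comp, h, lTensor_id, id_apply]⟩

theorem lTensor_prodMap_injective {f : A →ₗ[R] B} {g : A' →ₗ[R] B'}
    (hf : Injective (lTensor M f)) (hg : Injective (lTensor M g)) :
    Injective (lTensor M (f.prodMap g)) := by
  have h : (prodRight R R M B B').toLinearMap ∘ₗ lTensor M (f.prodMap g) =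
      (lTensor M f).prodMap (lTensor M g) ∘ₗ (prodRight R R M A A').toLinearMap := by
    ext <;> simp
  have : Injective (prodRight R R M B B' ∘ lTensor M (f.prodMap g)) := by
    rw [← LinearEquiv.coe_coe, ← coe_comp, h, coe_comp]
    exact (hf.prodMap hg).comp (prodRight R R M A A').injective
  exact this.of_comp

theorem exists_leftInverse_of_isTorsionBySet {I : Ideal R} [I.IsMaximal]
    (hA : Module.IsTorsionBySet R A I) (hB : Module.IsTorsionBySet R B I)
    (f : A →ₗ[R] B) (hf : Injective f) : ∃ g : B →ₗ[R] A, g ∘ₗ f = id := by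
  let : Field (R ⧸ I) := Ideal.Quotient.field I
  let := hA.module
  let := hB.module
  have : IsScalarTower R (R ⧸ I) A := hA.isScalarTower
  have : IsScalarTower R (R ⧸ I) B := hB.isScalarTower
  have hsurj : Surjective (algebraMap R (R ⧸ I)) := Ideal.Quotient.mk_surjective
  obtain ⟨g, hg⟩ := (f.extendScalarsOfSurjective hsurj).exists_leftInverse_of_injective
    (ker_eq_bot.mpr hf)
  exact ⟨g.restrictScalars R, congrArg (restrictScalars R) hg⟩

end LinearMap

theorem Module.IsTorsionBySet.prod {A B : Type*} [AddCommGroup A] [Module R A]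
    [AddCommGroup B] [Module R B] {s : Set R} (hA : IsTorsionBySet R A s)
    (hB : IsTorsionBySet R B s) : IsTorsionBySet R (A × B) s :=
  fun x r => Prod.ext (@hA x.1 r) (@hB x.2 r)

open Submodule

namespace Submodule

variable {N N' : Type*} [AddCommGroup N] [Module R N] [AddCommGroup N'] [Module R N']

theorem lTensor_subtype_injective_of_injOn {K : Submodule R N} {f : N →ₗ[R] N'}
    (hf : Set.InjOn f K) (h : Injective (lTensor M (K.map f).subtype)) :
    Injective (lTensor M K.subtype) := by
  let e := LinearEquiv.ofBijective (f.submoduleMap K)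
    ⟨submoduleMap_injective_of_injOn hf, submoduleMap_surjective f K⟩
  exact lTensor_injective_of_comp_eq e.toLinearMap f rfl (e.lTensor M).injective h

theorem lTensor_subtype_injective_of_isIdempotentElem {K : Submodule R N}
    {e : Module.End R N} (he : IsIdempotentElem e) (hK : range e ≤ K)
    (h : Injective (lTensor M (K.map (1 - e)).subtype)) :
    Injective (lTensor M K.subtype) := by
  have hK' : K.map (1 - e) ≤ K := by
    rintro _ ⟨x, hx, rfl⟩
    exact K.sub_mem hx (hK (mem_range_self e x))
  let p : K →ₗ[R] range e × K.map (1 - e) :=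
    (e.rangeRestrict ∘ₗ K.subtype).prod ((1 - e).submoduleMap K)
  have hp : (inclusion hK).coprod (inclusion hK') ∘ₗ p = LinearMap.id := by
    ext x
    simp [p]
  have hrange : e.rangeRestrict ∘ₗ (range e).subtype = LinearMap.id := by
    ext ⟨_, x, rfl⟩
    simpa using congrFun (congrArg DFunLike.coe he) x
  have hsq : (range e).subtype.prodMap (K.map (1 - e)).subtype ∘ₗ p =
      e.prod (1 - e) ∘ₗ K.subtype :=
    LinearMap.ext fun _ => rfl
  exact lTensor_injective_of_comp_eq p _ hsq (lTensor_injective_of_leftInverse _ hp)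
    (lTensor_prodMap_injective (lTensor_injective_of_leftInverse _ hrange) h)

theorem isTorsionBySet_of_le_pi {ι : Type*} {I : Ideal R} (hI : I ^ 2 = ⊥)
    {L : Submodule R (ι → R)} (hL : L ≤ pi Set.univ fun _ => I) :
    Module.IsTorsionBySet R L I := by
  intro x r
  ext i
  have : (r : R) * (x : ι → R) i ∈ I ^ 2 :=
    pow_two I ▸ Ideal.mul_mem_mul r.2 (mem_pi.mp (hL x.2) i trivial)
  simpa [hI] using this

theorem map_funLeft_le_pi {ι κ : Type*} {I : Ideal R} (f : κ → ι)
    {L : Submodule R (ι → R)} (hL : L ≤ pi Set.univ fun _ => I) :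
    L.map (funLeft R R f) ≤ pi Set.univ fun _ => I := by
  rintro _ ⟨x, hx, rfl⟩
  exact mem_pi.mpr fun k _ => mem_pi.mp (hL hx) (f k) trivial

end Submodule

namespace NQFlat

variable {n q : ℕ}

theorem lTensor_injective_map_span (h : NQFlat R M n q) {m : ℕ} {s : Finset (Fin m → R)}
    (hs : s.card ≤ q) (f : (Fin m → R) →ₗ[R] (Fin n → R)) :
    Injective (lTensor M ((span R (s : Set (Fin m → R))).map f).subtype) := by
  classical
  exact h _ ⟨s.image f, Finset.card_image_le.trans hs, by rw [Finset.coe_image, span_image]⟩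

theorem lTensor_injective_of_isUnit_apply (h : NQFlat R M n q)
    {s : Finset (Fin (n + 1) → R)} (hs : s.card ≤ q) {v : Fin (n + 1) → R} (hv : v ∈ s)
    {i : Fin (n + 1)} (hvi : IsUnit (v i)) :
    Injective (lTensor M (span R (s : Set (Fin (n + 1) → R))).subtype) := by
  obtain ⟨u, hu⟩ := hvi
  let e : Module.End R (Fin (n + 1) → R) := (proj i).smulRight ((↑u⁻¹ : R) • v)
  have he : ∀ x, e x = (x i * ↑u⁻¹) • v := fun x => smul_smul _ _ _
  have he_apply : ∀ x, e x i = x i := fun x => by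
    simp [he, ← hu, mul_assoc]
  have he_idem : IsIdempotentElem e := LinearMap.ext fun x => by
    rw [Module.End.mul_apply, he (e x), he_apply, ← he]
  have hrange : range e ≤ span R s := by
    rintro _ ⟨x, rfl⟩
    rw [he]
    exact smul_mem _ _ (subset_span hv)
  refine lTensor_subtype_injective_of_isIdempotentElem he_idem hrange ?_
  refine lTensor_subtype_injective_of_injOn (f := funLeft R R i.succAbove) ?_ ?_
  · have hzero : ∀ x ∈ (span R s).map (1 - e), x i = 0 := by
      rintro _ ⟨x, -, rfl⟩
      simp [he_apply]
    intro x hx y hy hxy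
    funext j
    obtain rfl | ⟨j, rfl⟩ := i.eq_self_or_eq_succAbove j
    · rw [hzero x hx, hzero y hy]
    · exact congrFun hxy j
  · rw [← Submodule.map_comp]
    exact h.lTensor_injective_map_span hs _

open IsLocalRing in
theorem lTensor_injective_of_le_pi_maximalIdeal [IsLocalRing R]
    (hP2 : maximalIdeal R ^ 2 = ⊥) (h₁ : NQFlat R M 1 q) (hn : NQFlat R M n q)
    {s : Finset (Fin (n + 1) → R)} (hs : s.card ≤ q)
    (hsP : span R (s : Set (Fin (n + 1) → R)) ≤ pi Set.univ fun _ => maximalIdeal R) :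
    Injective (lTensor M (span R (s : Set (Fin (n + 1) → R))).subtype) := by
  set K := span R (s : Set (Fin (n + 1) → R))
  let head : (Fin (n + 1) → R) →ₗ[R] (Fin 1 → R) := funLeft R R fun _ => 0
  let tail : (Fin (n + 1) → R) →ₗ[R] (Fin n → R) := funLeft R R Fin.succ
  let p : K →ₗ[R] K.map head × K.map tail := (head.submoduleMap K).prod (tail.submoduleMap K)
  have hp : Injective p := fun x y hxy => by
    ext i
    cases i using Fin.cases with
    | zero => exact congrFun (congrArg Subtype.val (congrArg Prod.fst hxy)) 0
    | succ i => exact congrFun (congrArg Subtype.val (congrArg Prod.snd hxy)) i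
  obtain ⟨r, hr⟩ := exists_leftInverse_of_isTorsionBySet (isTorsionBySet_of_le_pi hP2 hsP)
    ((isTorsionBySet_of_le_pi hP2 (map_funLeft_le_pi _ hsP)).prod
      (isTorsionBySet_of_le_pi hP2 (map_funLeft_le_pi _ hsP))) p hp
  exact lTensor_injective_of_comp_eq p (head.prod tail) (LinearMap.ext fun _ => rfl)
    (lTensor_injective_of_leftInverse r hr)
    (lTensor_prodMap_injective (h₁.lTensor_injective_map_span hs head)
      (hn.lTensor_injective_map_span hs tail))

theorem succ [IsLocalRing R] (hP2 : IsLocalRing.maximalIdeal R ^ 2 = ⊥)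
    (h₁ : NQFlat R M 1 q) (hn : NQFlat R M n q) : NQFlat R M (n + 1) q := by
  rintro _ ⟨s, hs, rfl⟩
  by_cases hunit : ∃ v ∈ s, ∃ i, IsUnit (v i)
  · obtain ⟨v, hv, i, hvi⟩ := hunit
    exact hn.lTensor_injective_of_isUnit_apply hs hv hvi
  · push Not at hunit
    have hsP : span R (s : Set (Fin (n + 1) → R)) ≤
        pi Set.univ fun _ => IsLocalRing.maximalIdeal R :=
      span_le.mpr fun v hv => mem_pi.mpr fun i _ =>
        (IsLocalRing.mem_maximalIdeal _).mpr (hunit v hv i)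
    exact lTensor_injective_of_le_pi_maximalIdeal hP2 h₁ hn hs hsP

end NQFlat

end

theorem stmt_12_general (R : Type*) [CommRing R] [IsLocalRing R]
    (hP2 : IsLocalRing.maximalIdeal R ^ 2 = ⊥) (q : ℕ)
    (M : Type*) [AddCommGroup M] [Module R M]
    (hM : NQFlat R M 1 q) :
    ∀ n : ℕ, 0 < n → NQFlat R M n q := by
  intro n hn
  induction n, hn using Nat.le_induction with
  | base => exact hM
  | succ n _ ih => exact NQFlat.succ hP2 hM ih

/-- over a commutative local ring whose maximal ideal `P` satisfies
`P² = 0`, every `(1,q)`-flat module is `(n,q)`-flat for all `n > 0`. -/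
theorem stmt_12 (R : Type*) [CommRing R] [IsLocalRing R]
    (hP2 : IsLocalRing.maximalIdeal R ^ 2 = ⊥) (q : ℕ) (hq : 0 < q)
    (M : Type*) [AddCommGroup M] [Module R M]
    (hM : NQFlat R M 1 q) :
    ∀ n : ℕ, 0 < n → NQFlat R M n q :=
  stmt_12_general R hP2 q M hM
end

section
/- Let R be a commutative local ring with maximal ideal P and residue field k such that P² = 0 and dim_k P > p for some positive integer p. Let a₁,…,a_{p+1} be k-linearly independent elements of P, let F = R^{p+1} with basis e₁,…,e_{p+1}, let K be the cyclic submodule generated by a₁e₁ + ⋯ + a_{p+1}e_{p+1}, and let M = F/K. Then M is not a flat R-module, but the natural map M ⊗_R A → M is injective for every ideal A of R generated by at most p elements. -/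
/-! With `P² = 0` every `y ∈ P` kills `a`, so `m ⊗ y ↦ y • m̃` is a well-defined pairing
`M ⊗ P → R^{p+1}`. It sends `∑ [eᵢ] ⊗ aᵢ`, which lies in the kernel of `M ⊗ P → M`, to `a ≠ 0`;
so `M` is not flat.

For an ideal `A ≠ R` with at most `p` generators, the `p + 1` elements `aᵢ`, independent modulo
`P`, cannot all lie in `A`. Hence the elements `c • a` of `R·a ∩ A·R^{p+1}` have `c ∈ P`, so they
vanish, and since `R^{p+1}` is flat this forces `M ⊗ A → M` to be injective. -/

open IsLocalRing
open scoped TensorProduct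

theorem Ideal.mul_eq_zero_of_sq_eq_bot {R : Type*} [CommSemiring R] {I : Ideal R}
    (hI : I ^ 2 = ⊥) {x y : R} (hx : x ∈ I) (hy : y ∈ I) : x * y = 0 := by
  have : x * y ∈ I ^ 2 := pow_two I ▸ Ideal.mul_mem_mul hx hy
  rwa [hI, Ideal.mem_bot] at this

section Flatness

variable {R : Type*} [CommRing R]

theorem rid_lTensor_subtype_mem_smul_top {M : Type*} [AddCommGroup M] [Module R M]
    (A : Ideal R) (w : M ⊗[R] A) :
    TensorProduct.rid R M (A.subtype.lTensor M w) ∈ A • (⊤ : Submodule R M) := by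
  induction w using TensorProduct.induction_on with
  | zero => simp
  | tmul m b => simpa using Submodule.smul_mem_smul b.2 Submodule.mem_top
  | add w w' hw hw' => simpa using add_mem hw hw'

theorem injective_rid_comp_lTensor_subtype_top (M : Type*) [AddCommGroup M] [Module R M] :
    Function.Injective
      ((TensorProduct.rid R M).toLinearMap ∘ₗ (⊤ : Ideal R).subtype.lTensor M) := by
  have : (TensorProduct.rid R M).toLinearMap ∘ₗ (⊤ : Ideal R).subtype.lTensor M =
      ((LinearEquiv.ofTop ⊤ rfl).lTensor M ≪≫ₗ TensorProduct.rid R M).toLinearMap :=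
    TensorProduct.ext' fun _ _ => rfl
  rw [this]
  exact LinearEquiv.injective _

/-- For flat `F` the kernel of `F ⧸ N ⊗ A → F ⧸ N` is `(N ⊓ A • F) / A • N`; we only need the
case where the numerator vanishes. -/
theorem injective_rid_comp_lTensor_quotient_of_inf_smul_top_eq_bot {F : Type*} [AddCommGroup F]
    [Module R F] [Module.Flat R F] {N : Submodule R F} {A : Ideal R} (h : N ⊓ A • ⊤ = ⊥) :
    Function.Injective
      ((TensorProduct.rid R (F ⧸ N)).toLinearMap ∘ₗ A.subtype.lTensor (F ⧸ N)) := by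
  rw [← LinearMap.ker_eq_bot, Submodule.eq_bot_iff]
  intro z hz
  obtain ⟨w, rfl⟩ := LinearMap.rTensor_surjective A N.mkQ_surjective z
  have hnat : N.mkQ ∘ₗ (TensorProduct.rid R F).toLinearMap ∘ₗ A.subtype.lTensor F =
      (TensorProduct.rid R (F ⧸ N)).toLinearMap ∘ₗ A.subtype.lTensor (F ⧸ N) ∘ₗ
        N.mkQ.rTensor A :=
    TensorProduct.ext' fun _ _ => rfl
  have hN : TensorProduct.rid R F (A.subtype.lTensor F w) ∈ N := by
    rw [← Submodule.Quotient.mk_eq_zero, ← Submodule.mkQ_apply]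
    exact (LinearMap.congr_fun hnat w).trans hz
  have h0 : TensorProduct.rid R F (A.subtype.lTensor F w) = 0 := by
    simpa [h] using Submodule.mem_inf.2 ⟨hN, rid_lTensor_subtype_mem_smul_top A w⟩
  have hw : w = 0 :=
    ((TensorProduct.rid R F).injective.comp (Module.Flat.lTensor_preserves_injective_linearMap _
      A.injective_subtype)) (by simpa using h0)
  simp [hw]

theorem not_flat_quotient_span_singleton {ι : Type*} [Fintype ι] [DecidableEq ι] {x : ι → R}
    (hx : x ≠ 0) (I : Ideal R) (hxI : ∀ i, x i ∈ I) (hIx : ∀ y ∈ I, y • x = 0) :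
    ¬ Module.Flat R ((ι → R) ⧸ Submodule.span R {x}) := by
  intro hflat
  set N := Submodule.span R {x}
  have hN : N ≤ LinearMap.ker ((LinearMap.lsmul R (ι → R)).comp I.subtype).flip := by
    rw [Submodule.span_le, Set.singleton_subset_iff, SetLike.mem_coe, LinearMap.mem_ker]
    exact LinearMap.ext fun y => hIx y y.2
  let Ψ : ((ι → R) ⧸ N) ⊗[R] I →ₗ[R] ι → R := TensorProduct.lift (N.liftQ _ hN)
  let z : ((ι → R) ⧸ N) ⊗[R] I := ∑ i, N.mkQ (Pi.single i 1) ⊗ₜ ⟨x i, hxI i⟩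
  have hΨ : Ψ z = x := by
    simp [Ψ, z, ← pi_eq_sum_univ']
  have hz : I.subtype.lTensor _ z = 0 := by
    apply (TensorProduct.rid R _).injective
    calc TensorProduct.rid R _ (I.subtype.lTensor _ z) = N.mkQ (∑ i, x i • Pi.single i 1) := by
          simp [z]
      _ = 0 := by
          rw [← pi_eq_sum_univ', Submodule.mkQ_apply, Submodule.Quotient.mk_eq_zero]
          exact Submodule.mem_span_singleton_self x
      _ = TensorProduct.rid R _ 0 := (map_zero _).symm
  have hz0 : z = 0 := Module.Flat.lTensor_preserves_injective_linearMap _ I.injective_subtype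
    (by rw [hz, map_zero])
  exact hx (by rw [← hΨ, hz0, map_zero])

end Flatness

section SquareZero

variable {R : Type*} [CommRing R] [IsLocalRing R] (hP2 : maximalIdeal R ^ 2 = ⊥)
  {ι : Type*} {a : ι → R}
include hP2

theorem card_le_card_of_forall_mem_span [Fintype ι]
    (hind : ∀ c : ι → R, ∑ i, c i * a i = 0 → ∀ i, c i ∈ maximalIdeal R) {s : Finset R}
    (hs : (s : Set R) ⊆ maximalIdeal R) (ha : ∀ i, a i ∈ Ideal.span s) :
    Fintype.card ι ≤ s.card := by
  choose r hr using fun i => Submodule.mem_span_finset.1 (ha i)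
  let v : ι → s → ResidueField R := fun i b => residue R (r i b)
  have hv : LinearIndependent (ResidueField R) v := by
    rw [Fintype.linearIndependent_iff]
    intro g hg i
    choose c hc using fun i => residue_surjective (g i)
    have hc0 : ∑ i, c i * a i = 0 :=
      calc ∑ i, c i * a i = ∑ i, ∑ b ∈ s, c i * r i b * b :=
            Finset.sum_congr rfl fun i _ => by simp [← (hr i).2, Finset.mul_sum, mul_assoc]
        _ = ∑ b ∈ s, (∑ i, c i * r i b) * b := by rw [Finset.sum_comm]; simp [Finset.sum_mul]
        _ = 0 := Finset.sum_eq_zero fun b hb => by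
            refine Ideal.mul_eq_zero_of_sq_eq_bot hP2 ?_ (hs hb)
            rw [← residue_eq_zero_iff]
            simpa [v, hc] using congrFun hg ⟨b, hb⟩
    simpa [← hc, residue_eq_zero_iff] using hind c hc0 i
  simpa using hv.fintype_card_le_finrank

theorem span_singleton_inf_smul_top_eq_bot (haP : ∀ i, a i ∈ maximalIdeal R) {A : Ideal R}
    (hA : ∃ i, a i ∉ A) : Submodule.span R {a} ⊓ A • ⊤ = ⊥ := by
  rw [eq_bot_iff]
  rintro f ⟨hfa, hfA⟩
  obtain ⟨c, rfl⟩ := Submodule.mem_span_singleton.1 hfa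
  have hcA : ∀ i, c * a i ∈ A := by
    have : A • (⊤ : Submodule R (ι → R)) ≤ Submodule.pi Set.univ fun _ => A :=
      Submodule.smul_le.2 fun r hr f _ i _ => A.mul_mem_right (f i) hr
    exact fun i => this hfA i (Set.mem_univ i)
  by_cases hc : IsUnit c
  · obtain ⟨i, hi⟩ := hA
    exact (hi ((A.unit_mul_mem_iff_mem hc).1 (hcA i))).elim
  · exact funext fun i =>
      Ideal.mul_eq_zero_of_sq_eq_bot hP2 ((mem_maximalIdeal c).2 hc) (haP i)

end SquareZero

theorem stmt_13_general (R : Type*) [CommRing R] [IsLocalRing R]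
    (hP2 : maximalIdeal R ^ 2 = ⊥) (p : ℕ)
    (a : Fin (p + 1) → R) (haP : ∀ i, a i ∈ maximalIdeal R)
    (hind : ∀ c : Fin (p + 1) → R, (∑ i, c i * a i) = 0 → ∀ i, c i ∈ maximalIdeal R) :
    ¬ Module.Flat R ((Fin (p + 1) → R) ⧸ (Submodule.span R {a})) ∧
      ∀ A : Ideal R,
        (∃ s : Finset R, s.card ≤ p ∧ Ideal.span (s : Set R) = A) →
        Function.Injective
          ((TensorProduct.rid R ((Fin (p + 1) → R) ⧸ (Submodule.span R {a}))).toLinearMap ∘ₗ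
            LinearMap.lTensor ((Fin (p + 1) → R) ⧸ (Submodule.span R {a}))
              (A.subtype)) := by
  have ha0 : a ≠ 0 := by
    rintro rfl
    exact (maximalIdeal.isMaximal R).ne_top
      ((Ideal.eq_top_iff_one _).2 (hind 1 (by simp) 0))
  refine ⟨not_flat_quotient_span_singleton ha0 (maximalIdeal R) haP fun y hy =>
    funext fun i => Ideal.mul_eq_zero_of_sq_eq_bot hP2 hy (haP i), ?_⟩
  rintro A ⟨s, hcard, rfl⟩
  by_cases hA : Ideal.span (s : Set R) = ⊤
  · rw [hA]
    exact injective_rid_comp_lTensor_subtype_top _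
  refine injective_rid_comp_lTensor_quotient_of_inf_smul_top_eq_bot
    (span_singleton_inf_smul_top_eq_bot hP2 haP ?_)
  by_contra! hall
  have := card_le_card_of_forall_mem_span hP2 hind
    (Ideal.subset_span.trans (le_maximalIdeal hA)) hall
  rw [Fintype.card_fin] at this
  omega

/-- let `(R,P)` be commutative local with `P² = 0`, and let
`a₁, …, a_{p+1} ∈ P` be linearly independent over the residue field `k = R/P`
(equivalently: any relation `∑ cᵢ aᵢ = 0` forces all `cᵢ ∈ P`).  Let
`M = R^{p+1} / R·(a₁,…,a_{p+1})`.  Then `M` is not flat, but the natural map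
`M ⊗_R A → M` is injective for every ideal `A` generated by at most `p` elements. -/
theorem stmt_13 (R : Type*) [CommRing R] [IsLocalRing R]
    (hP2 : maximalIdeal R ^ 2 = ⊥) (p : ℕ) (hp : 0 < p)
    (a : Fin (p + 1) → R) (haP : ∀ i, a i ∈ maximalIdeal R)
    (hind : ∀ c : Fin (p + 1) → R, (∑ i, c i * a i) = 0 → ∀ i, c i ∈ maximalIdeal R) :
    ¬ Module.Flat R ((Fin (p + 1) → R) ⧸ (Submodule.span R {a})) ∧
      ∀ A : Ideal R,
        (∃ s : Finset R, s.card ≤ p ∧ Ideal.span (s : Set R) = A) →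
        Function.Injective
          ((TensorProduct.rid R ((Fin (p + 1) → R) ⧸ (Submodule.span R {a}))).toLinearMap ∘ₗ
            LinearMap.lTensor ((Fin (p + 1) → R) ⧸ (Submodule.span R {a}))
              (A.subtype)) :=
  stmt_13_general R hP2 p a haP hind
end

section
/- Let R be a commutative ring and let 0 → A → B → C → 0 be a short exact sequence of R-modules. If for every maximal ideal P of R and every R_P-module G that is a quotient of R_P^n by an m-generated submodule, the localized sequence remains exact after tensoring with G over R_P, then for every R-module M that is a quotient of R^n by an m-generated submodule, the sequence 0 → M ⊗ A → M ⊗ B → M ⊗ C → 0 is exact. -/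
/-!
Tensoring is right exact, so only the injectivity of `M ⊗ f` is at stake, and injectivity can be
checked after localizing at every maximal ideal `P`. For `M = Rⁿ ⧸ K` the localization `M_P` is
`R_Pⁿ ⧸ K_P`, where `K_P` is spanned by the images of the `m` generators of `K`, and
`(M ⊗_R f)_P` is `M_P ⊗_{R_P} f_P`, which is injective by hypothesis.
-/

section LocalizedTensor

variable {R : Type*} [CommRing R] (S : Submonoid R)
  {N N' A B : Type*} [AddCommGroup N] [AddCommGroup N'] [AddCommGroup A] [AddCommGroup B]
  [Module R N] [Module R N'] [Module R A] [Module R B]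

theorem IsLocalizedModule.map_lTensor_eq_lTensor_localizedModuleMap (q : N →ₗ[R] N')
    [IsLocalizedModule S q] (f : A →ₗ[R] B) :
    IsLocalizedModule.map S (TensorProduct.map q (LocalizedModule.mkLinearMap S A))
        (TensorProduct.map q (LocalizedModule.mkLinearMap S B)) (f.lTensor N) =
      ((LocalizedModule.map S f).restrictScalars R).lTensor N' := by
  apply IsLocalizedModule.linearMap_ext S (TensorProduct.map q (LocalizedModule.mkLinearMap S A))
    (TensorProduct.map q (LocalizedModule.mkLinearMap S B))
  rw [IsLocalizedModule.map_comp]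
  ext x a
  simp [LocalizedModule.map_mk]

end LocalizedTensor

section RestrictScalars

variable {R : Type*} [CommRing R] {Rₛ : Type*} [CommRing Rₛ] [Algebra R Rₛ]
  {M A B : Type*} [AddCommGroup M] [AddCommGroup A] [AddCommGroup B]
  [Module R M] [Module R A] [Module R B] [Module Rₛ M] [Module Rₛ A] [Module Rₛ B]
  [IsScalarTower R Rₛ M] [IsScalarTower R Rₛ A] [IsScalarTower R Rₛ B]

theorem IsLocalization.lTensor_restrictScalars_injective_iff (S : Submonoid R)
    [IsLocalization S Rₛ] (f : A →ₗ[Rₛ] B) :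
    Function.Injective ((f.restrictScalars R).lTensor M) ↔ Function.Injective (f.lTensor M) := by
  have hcomm : ((f.restrictScalars R).lTensor M) ∘ IsLocalization.moduleTensorEquiv S Rₛ M A =
      IsLocalization.moduleTensorEquiv S Rₛ M B ∘ f.lTensor M := by
    ext x
    induction x using TensorProduct.induction_on with
    | zero => simp
    | tmul x a => rfl
    | add x y hx hy => simp_all
  rw [← EquivLike.comp_injective _ (IsLocalization.moduleTensorEquiv S Rₛ M B), ← hcomm,
    EquivLike.injective_comp]

end RestrictScalars

section LocalGlobal

variable {R : Type*} [CommRing R] {N A B : Type*} [AddCommGroup N] [AddCommGroup A]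
  [AddCommGroup B] [Module R N] [Module R A] [Module R B]

theorem LinearMap.lTensor_injective_of_isLocalized_maximal
    (N' : ∀ (P : Ideal R) [P.IsMaximal], Type*)
    [∀ (P : Ideal R) [P.IsMaximal], AddCommGroup (N' P)]
    [∀ (P : Ideal R) [P.IsMaximal], Module R (N' P)]
    [∀ (P : Ideal R) [P.IsMaximal], Module (Localization P.primeCompl) (N' P)]
    [∀ (P : Ideal R) [P.IsMaximal], IsScalarTower R (Localization P.primeCompl) (N' P)]
    (q : ∀ (P : Ideal R) [P.IsMaximal], N →ₗ[R] N' P)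
    [hq : ∀ (P : Ideal R) [P.IsMaximal], IsLocalizedModule.AtPrime P (q P)]
    (f : A →ₗ[R] B)
    (h : ∀ (P : Ideal R) [P.IsMaximal],
      Function.Injective ((LocalizedModule.map P.primeCompl f).lTensor (N' P))) :
    Function.Injective (f.lTensor N) := by
  refine injective_of_isLocalized_maximal _
    (fun P _ ↦ TensorProduct.map (q P) (LocalizedModule.mkLinearMap P.primeCompl A)) _
    (fun P _ ↦ TensorProduct.map (q P) (LocalizedModule.mkLinearMap P.primeCompl B)) _
    fun P _ ↦ ?_
  rw [IsLocalizedModule.map_lTensor_eq_lTensor_localizedModuleMap]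
  exact (IsLocalization.lTensor_restrictScalars_injective_iff P.primeCompl _).mpr (h P)

end LocalGlobal

theorem stmt_14_general (R : Type*) [CommRing R] (n m : ℕ)
    (A B C : Type*) [AddCommGroup A] [AddCommGroup B] [AddCommGroup C]
    [Module R A] [Module R B] [Module R C]
    (f : A →ₗ[R] B) (g : B →ₗ[R] C)
    (hfg : Function.Exact f g) (hg : Function.Surjective g)
    (hloc : ∀ (P : Ideal R) [P.IsMaximal],
      ∀ K : Submodule (Localization P.primeCompl) (Fin n → Localization P.primeCompl),
        (∃ s : Finset (Fin n → Localization P.primeCompl), s.card ≤ m ∧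
            Submodule.span (Localization P.primeCompl)
              (s : Set (Fin n → Localization P.primeCompl)) = K) →
        Function.Injective
            (LinearMap.lTensor ((Fin n → Localization P.primeCompl) ⧸ K)
              (LocalizedModule.map P.primeCompl f)) ∧
          Function.Exact
            (LinearMap.lTensor ((Fin n → Localization P.primeCompl) ⧸ K)
              (LocalizedModule.map P.primeCompl f))
            (LinearMap.lTensor ((Fin n → Localization P.primeCompl) ⧸ K)
              (LocalizedModule.map P.primeCompl g)) ∧
          Function.Surjective
            (LinearMap.lTensor ((Fin n → Localization P.primeCompl) ⧸ K)
              (LocalizedModule.map P.primeCompl g))) :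
    ∀ K : Submodule R (Fin n → R),
      (∃ s : Finset (Fin n → R), s.card ≤ m ∧
          Submodule.span R (s : Set (Fin n → R)) = K) →
      Function.Injective (LinearMap.lTensor ((Fin n → R) ⧸ K) f) ∧
        Function.Exact (LinearMap.lTensor ((Fin n → R) ⧸ K) f)
          (LinearMap.lTensor ((Fin n → R) ⧸ K) g) ∧
        Function.Surjective (LinearMap.lTensor ((Fin n → R) ⧸ K) g) := by
  classical
  rintro K ⟨s, hs, rfl⟩
  refine ⟨?_, lTensor_exact _ hfg hg, LinearMap.lTensor_surjective _ hg⟩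
  let π (P : Ideal R) [P.IsMaximal] :
      (Fin n → R) →ₗ[R] (Fin n → Localization P.primeCompl) :=
    LinearMap.pi fun i ↦ Algebra.linearMap R _ ∘ₗ LinearMap.proj i
  let Kₚ (P : Ideal R) [P.IsMaximal] := (Submodule.span R (s : Set (Fin n → R))).localized'
    (Localization P.primeCompl) P.primeCompl (π P)
  refine LinearMap.lTensor_injective_of_isLocalized_maximal
    (fun P _ ↦ (Fin n → Localization P.primeCompl) ⧸ Kₚ P)
    (fun P _ ↦ Submodule.toLocalizedQuotient' _ P.primeCompl (π P) _)
    (hq := fun P _ ↦ IsLocalizedModule.toLocalizedQuotient' _ P.primeCompl (π P) _) f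
    fun P _ ↦ (hloc P (Kₚ P) ⟨s.image (π P), Finset.card_image_le.trans hs, ?_⟩).1
  rw [Finset.coe_image, ← Submodule.localized'_span _ P.primeCompl (π P)]

/-- let `0 → A → B → C → 0` be a short exact sequence of modules
over a commutative ring `R`.  If for every maximal ideal `P` and every
`(n,m)`-presented `R_P`-module `G` (a quotient of `R_P^n` by an `m`-generated
submodule) the localized sequence stays exact after tensoring with `G` over `R_P`,
then for every `(n,m)`-presented `R`-module `M` (a quotient of `R^n` by an
`m`-generated submodule) the sequence `0 → M ⊗ A → M ⊗ B → M ⊗ C → 0` is exact. -/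
theorem stmt_14 (R : Type*) [CommRing R] (n m : ℕ) (hn : 0 < n) (hm : 0 < m)
    (A B C : Type*) [AddCommGroup A] [AddCommGroup B] [AddCommGroup C]
    [Module R A] [Module R B] [Module R C]
    (f : A →ₗ[R] B) (g : B →ₗ[R] C)
    (hf : Function.Injective f) (hfg : Function.Exact f g) (hg : Function.Surjective g)
    (hloc : ∀ (P : Ideal R) [P.IsMaximal],
      ∀ K : Submodule (Localization P.primeCompl) (Fin n → Localization P.primeCompl),
        (∃ s : Finset (Fin n → Localization P.primeCompl), s.card ≤ m ∧
            Submodule.span (Localization P.primeCompl)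
              (s : Set (Fin n → Localization P.primeCompl)) = K) →
        Function.Injective
            (LinearMap.lTensor ((Fin n → Localization P.primeCompl) ⧸ K)
              (LocalizedModule.map P.primeCompl f)) ∧
          Function.Exact
            (LinearMap.lTensor ((Fin n → Localization P.primeCompl) ⧸ K)
              (LocalizedModule.map P.primeCompl f))
            (LinearMap.lTensor ((Fin n → Localization P.primeCompl) ⧸ K)
              (LocalizedModule.map P.primeCompl g)) ∧
          Function.Surjective
            (LinearMap.lTensor ((Fin n → Localization P.primeCompl) ⧸ K)
              (LocalizedModule.map P.primeCompl g))) :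
    ∀ K : Submodule R (Fin n → R),
      (∃ s : Finset (Fin n → R), s.card ≤ m ∧
          Submodule.span R (s : Set (Fin n → R)) = K) →
      Function.Injective (LinearMap.lTensor ((Fin n → R) ⧸ K) f) ∧
        Function.Exact (LinearMap.lTensor ((Fin n → R) ⧸ K) f)
          (LinearMap.lTensor ((Fin n → R) ⧸ K) g) ∧
        Function.Surjective (LinearMap.lTensor ((Fin n → R) ⧸ K) g) :=
  stmt_14_general R n m A B C f g hfg hg hloc
end

section
/- Let R be a commutative ring and M an R-module. Then M is (n,m)-flat over R if and only if M_P is (n,m)-flat over R_P for every maximal ideal P of R. -/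
/-!
Localization is exact and commutes with tensor products, so localizing
`M ⊗ K → M ⊗ Rⁿ` at `P` gives `M_P ⊗ K_P → M_P ⊗ R_Pⁿ`, and injectivity of a linear map
can be checked at all maximal ideals. Moreover the submodules of `R_Pⁿ` generated by at most
`m` elements are exactly the `K_P` with `K ≤ Rⁿ` generated by at most `m` elements: clearing
the denominators of the generators only rescales them by units.
-/

/-- An `R`-module `M` is `(n,m)`-flat if for every submodule `K` of the free
module `Rⁿ` generated by at most `m` elements, the natural map
`M ⊗[R] K → M ⊗[R] Rⁿ` is injective. -/
def NMFlat (R : Type*) [CommRing R] (M : Type*) [AddCommGroup M] [Module R M]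
    (n m : ℕ) : Prop :=
  ∀ K : Submodule R (Fin n → R),
    (∃ s : Finset (Fin n → R), s.card ≤ m ∧ Submodule.span R (s : Set (Fin n → R)) = K) →
    Function.Injective (LinearMap.lTensor M K.subtype)

open TensorProduct LinearMap Submodule

theorem TensorProduct.injective_lTensor_restrictScalars_iff {R A : Type*} [CommSemiring R]
    [CommSemiring A] [Algebra R A] {M N N' : Type*}
    [AddCommMonoid M] [Module R M] [Module A M] [IsScalarTower R A M]
    [AddCommMonoid N] [Module R N] [Module A N] [IsScalarTower R A N]
    [AddCommMonoid N'] [Module R N'] [Module A N'] [IsScalarTower R A N']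
    [CompatibleSMul R A M N] [CompatibleSMul R A M N'] (Φ : N →ₗ[A] N') :
    Function.Injective (lTensor M (Φ.restrictScalars R)) ↔ Function.Injective (lTensor M Φ) := by
  have hcomm : ⇑(equivOfCompatibleSMul R A A M N') ∘ lTensor M Φ =
      lTensor M (Φ.restrictScalars R) ∘ equivOfCompatibleSMul R A A M N := by
    ext x
    induction x with
    | zero => simp
    | tmul => rfl
    | add x y hx hy => simp_all
  rw [← EquivLike.comp_injective _ (equivOfCompatibleSMul R A A M N'), hcomm,
    EquivLike.injective_comp]

section

variable {R : Type*} [CommSemiring R] (S : Submonoid R) (A : Type*) [CommSemiring A]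
  [Algebra R A] [IsLocalization S A]
  {N Nₛ : Type*} [AddCommMonoid N] [Module R N] [AddCommMonoid Nₛ] [Module R Nₛ]
  (g : N →ₗ[R] Nₛ) [IsLocalizedModule S g]

theorem Submodule.exists_finset_card_le_localized'_span_eq [Module A Nₛ] [IsScalarTower R A Nₛ]
    (s : Finset Nₛ) :
    ∃ t : Finset N, t.card ≤ s.card ∧ (span R (t : Set N)).localized' A S g = span A s := by
  classical
  choose x hx using IsLocalizedModule.surj S g
  refine ⟨s.image fun y => (x y).1, Finset.card_image_le, ?_⟩
  rw [localized'_span, Finset.coe_image, ← Set.image_comp, span_eq_iSup_of_singleton_spans,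
    span_eq_iSup_of_singleton_spans, iSup_image]
  refine iSup_congr fun y => iSup_congr fun _ => ?_
  rw [Function.comp_apply, ← hx, Submonoid.smul_def, ← algebraMap_smul A,
    span_singleton_smul_eq (IsLocalization.map_units A (x y).2)]

variable {M Mₛ : Type*} [AddCommMonoid M] [Module R M] [AddCommMonoid Mₛ] [Module R Mₛ]
  (f : M →ₗ[R] Mₛ) [IsLocalizedModule S f]

theorem IsLocalizedModule.map_lTensor_eq_lTensor {N' N'ₛ : Type*} [AddCommMonoid N']
    [Module R N'] [AddCommMonoid N'ₛ] [Module R N'ₛ] (g' : N' →ₗ[R] N'ₛ) [IsLocalizedModule S g']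
    {φ : N →ₗ[R] N'} {ψ : Nₛ →ₗ[R] N'ₛ} (h : ψ ∘ₗ g = g' ∘ₗ φ) :
    IsLocalizedModule.map S (TensorProduct.map f g) (TensorProduct.map f g') (lTensor M φ) =
      lTensor Mₛ ψ := by
  apply IsLocalizedModule.ext S (TensorProduct.map f g)
    (IsLocalizedModule.map_units (TensorProduct.map f g'))
  rw [IsLocalizedModule.map_comp]
  ext x y
  simpa using congr(f x ⊗ₜ[R] $h y).symm

theorem Submodule.injective_lTensor_localized'_subtype_iff [Module A Mₛ] [IsScalarTower R A Mₛ]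
    [Module A Nₛ] [IsScalarTower R A Nₛ] (K : Submodule R N) :
    Function.Injective (lTensor Mₛ (K.localized' A S g).subtype) ↔
      Function.Injective (IsLocalizedModule.map S (TensorProduct.map f (K.toLocalized' A S g))
        (TensorProduct.map f g) (lTensor M K.subtype)) := by
  have := IsLocalization.tensorProduct_compatibleSMul S A Mₛ (K.localized' A S g)
  have := IsLocalization.tensorProduct_compatibleSMul S A Mₛ Nₛ
  rw [IsLocalizedModule.map_lTensor_eq_lTensor S f (g := K.toLocalized' A S g) (g' := g)
    (ψ := (K.localized' A S g).subtype.restrictScalars R) rfl]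
  exact (injective_lTensor_restrictScalars_iff _).symm

end

theorem stmt_15_general (R : Type*) [CommRing R] (M : Type*) [AddCommGroup M] [Module R M]
    (n m : ℕ) :
    NMFlat R M n m ↔
      ∀ (P : Ideal R) [P.IsMaximal],
        NMFlat (Localization P.primeCompl) (LocalizedModule P.primeCompl M) n m := by
  let ι (P : Ideal R) [P.IsMaximal] : (Fin n → R) →ₗ[R] (Fin n → Localization P.primeCompl) :=
    LinearMap.pi fun i => Algebra.linearMap R _ ∘ₗ LinearMap.proj i
  constructor
  · rintro h P _ L ⟨s, hs, rfl⟩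
    obtain ⟨t, ht, hK⟩ :=
      exists_finset_card_le_localized'_span_eq P.primeCompl (Localization P.primeCompl) (ι P) s
    rw [← hK, injective_lTensor_localized'_subtype_iff P.primeCompl _ (ι P)
      (LocalizedModule.mkLinearMap _ M)]
    exact IsLocalizedModule.map_injective _ _ _ _ (h _ ⟨t, ht.trans hs, rfl⟩)
  · rintro h K ⟨s, hs, rfl⟩
    refine injective_of_isLocalized_maximal _
      (fun P _ => TensorProduct.map (LocalizedModule.mkLinearMap P.primeCompl M)
        ((span R (s : Set (Fin n → R))).toLocalized' (Localization P.primeCompl)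
          P.primeCompl (ι P))) _
      (fun P _ => TensorProduct.map (LocalizedModule.mkLinearMap P.primeCompl M) (ι P)) _
      fun P _ => ?_
    rw [← injective_lTensor_localized'_subtype_iff]
    classical
    exact h P _ ⟨s.image (ι P), Finset.card_image_le.trans hs,
      by rw [localized'_span, Finset.coe_image]⟩

/-- over a commutative ring `R`, a module `M` is `(n,m)`-flat iff
its localization `M_P` is `(n,m)`-flat over `R_P` for every maximal ideal `P`. -/
theorem stmt_15 (R : Type*) [CommRing R] (M : Type*) [AddCommGroup M] [Module R M]
    (n m : ℕ) (hn : 0 < n) (hm : 0 < m) :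
    NMFlat R M n m ↔
      ∀ (P : Ideal R) [P.IsMaximal],
        NMFlat (Localization P.primeCompl) (LocalizedModule P.primeCompl M) n m :=
  stmt_15_general R M n m
end

section
/- Let R be an algebra over a commutative ring S, E an injective S-module that cogenerates the category of S-modules, and M a right R-module. Then M is (n,m)-flat if and only if Hom_S(M,E) is an (n,m)-injective left R-module. -/
/-!
Both sides become statements about linear systems. A left module `N` is `(n,m)`-injective iff
every system `F j = ∑ t, k j t • x t` (`m` equations, `n` unknowns) whose right-hand sides satisfy
all left linear relations among the rows `k j` has a solution `x : Fin n → N`. For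
`N = Hom_S(M, E)` the family `F` is one `S`-linear functional `ψ` on `Mᵐ`; consistency says that
`ψ` kills the `S`-span of the trivial solutions `(z · c j)_j` (with `∑ j, c j • k j = 0`) of
`v · k = 0`, and solvability says that `ψ` factors through `v ↦ v · k : Mᵐ → Mⁿ`, which by
injectivity of `E` means that `ψ` kills its kernel. Flatness says that this kernel is the span of
the trivial solutions, and since `E` cogenerates, a functional separates any other element of
the kernel from it.

`Module.Injective S E` only speaks about modules in the universe of `E`. Extension along
submodules of modules in the universe of `M` is recovered by Baer's Zorn argument: each step
adjoins a cyclic module, and cyclic modules are small because `E` cogenerates them.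
-/

open MulOpposite

section

variable (S R M E : Type*) [CommRing S] [Ring R] [Algebra S R]
  [AddCommGroup M] [Module Rᵐᵒᵖ M] [Module S M] [SMulCommClass Rᵐᵒᵖ S M]
  [AddCommGroup E] [Module S E]

/-- Right multiplication by `r` on a right `R`-module `M`, as an `S`-linear map. -/
def rightMulS (r : R) : M →ₗ[S] M where
  toFun x := op r • x
  map_add' x y := smul_add (op r) x y
  map_smul' s x := by
    show op r • s • x = s • op r • x
    exact smul_comm (op r) s x

/-- The left `R`-module structure on `Hom_S(M, E)` for a right `R`-module `M`:
`(r • f) x = f (x · r)`. -/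
instance homModule : Module R (M →ₗ[S] E) where
  smul r f := f ∘ₗ rightMulS S R M r
  one_smul f := by
    ext x
    show f (op (1 : R) • x) = f x
    rw [op_one, one_smul]
  mul_smul r r' f := by
    ext x
    show f (op (r * r') • x) = f (op r' • op r • x)
    rw [op_mul, mul_smul]
  smul_zero r := by ext x; rfl
  smul_add r f g := by ext x; rfl
  add_smul r r' f := by
    ext x
    show f (op (r + r') • x) = f (op r • x) + f (op r' • x)
    rw [op_add, add_smul, map_add]
  zero_smul f := by
    ext x
    show f (op (0 : R) • x) = 0
    rw [op_zero, zero_smul, map_zero]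

/-- A right `R`-module `M` is `(n,m)`-flat: for every `m`-generated submodule `K`
of the free left `R`-module `Rⁿ`, the natural map `M ⊗_R K → M ⊗_R Rⁿ` is
injective.  This is expressed by the element-wise (equational) criterion. -/
def NMFlatRight (n m : ℕ) : Prop :=
  ∀ (k : Fin m → Fin n → R) (y : Fin m → M),
    (∀ t, ∑ j, op (k j t) • y j = 0) →
    ∃ (L : ℕ) (z : Fin L → M) (c : Fin L → Fin m → R),
      (∀ l t, ∑ j, c l j * k j t = 0) ∧ ∀ j, y j = ∑ l, op (c l j) • z l

end

/-- A left `R`-module `N` is `(n,m)`-injective: for every `m`-generated submodule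
`K` of the free left `R`-module `Rⁿ`, every homomorphism `K → N` extends to `Rⁿ`. -/
def NMInjectiveLeft (R : Type*) [Ring R] (N : Type*) [AddCommGroup N] [Module R N]
    (n m : ℕ) : Prop :=
  ∀ K : Submodule R (Fin n → R),
    (∃ s : Finset (Fin n → R), s.card ≤ m ∧ Submodule.span R (s : Set (Fin n → R)) = K) →
    ∀ f : K →ₗ[R] N, ∃ g : (Fin n → R) →ₗ[R] N, ∀ x : K, g x.1 = f x


def Cogenerates.{v, u, t} (S : Type u) [Ring S] (E : Type t) [AddCommGroup E] [Module S E] : Prop :=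
  ∀ (N : Type v) [AddCommGroup N] [Module S N] (z : N), z ≠ 0 → ∃ f : N →ₗ[S] E, f z ≠ 0

theorem LinearMap.exists_comp_rangeRestrict_eq {R X Y Z : Type*} [Ring R] [AddCommGroup X]
    [AddCommGroup Y] [AddCommGroup Z] [Module R X] [Module R Y] [Module R Z]
    (f : X →ₗ[R] Y) (g : X →ₗ[R] Z) (h : LinearMap.ker f ≤ LinearMap.ker g) :
    ∃ g' : LinearMap.range f →ₗ[R] Z, g' ∘ₗ f.rangeRestrict = g :=
  ⟨(LinearMap.ker f).liftQ g h ∘ₗ f.quotKerEquivRange.symm.toLinearMap, LinearMap.ext fun z => by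
    change (LinearMap.ker f).liftQ g h (f.quotKerEquivRange.symm ⟨f z, mem_range_self f z⟩) = g z
    rw [LinearMap.quotKerEquivRange_symm_apply_image]
    rfl⟩

section Extension

universe w x

variable {S : Type*} [Ring S] {E : Type x} [AddCommGroup E] [Module S E]

theorem Cogenerates.exists_le_ker_apply_ne_zero (hE : Cogenerates.{w} S E) {N : Type w}
    [AddCommGroup N] [Module S N] {P : Submodule S N} {y : N} (hy : y ∉ P) :
    ∃ G : N →ₗ[S] E, P ≤ LinearMap.ker G ∧ G y ≠ 0 := by
  obtain ⟨χ, hχ⟩ := hE (N ⧸ P) (Submodule.Quotient.mk y)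
    (by rwa [Ne, Submodule.Quotient.mk_eq_zero])
  exact ⟨χ ∘ₗ P.mkQ, fun p hp => by simp [(Submodule.Quotient.mk_eq_zero P).mpr hp], hχ⟩

/-- `N` embeds into `E ^ Hom(N, E)`, and `Hom(N, E)` embeds into `E ^ k` through the values on
`k` generators. -/
theorem Cogenerates.small_of_finite (hE : Cogenerates.{w} S E) (N : Type w) [AddCommGroup N]
    [Module S N] [Module.Finite S N] : Small.{x} N := by
  obtain ⟨k, s, hs⟩ := Module.Finite.exists_fin (R := S) (M := N)
  have : Small.{x} (N →ₗ[S] E) :=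
    small_of_injective (f := fun f : N →ₗ[S] E => f ∘ s) fun f g hfg =>
      LinearMap.ext_on_range hs (congrFun hfg)
  refine small_of_injective (f := fun (z : N) (f : N →ₗ[S] E) => f z) fun a b hab => ?_
  by_contra hne
  obtain ⟨f, hf⟩ := hE N (a - b) (sub_ne_zero.mpr hne)
  exact hf (by rw [map_sub, sub_eq_zero]; exact congrFun hab f)

/-- The pushout `(Y × E) ⧸ W` of `φ` along `X ≤ Y` contains `E` and is small, being covered by
`(Y ⧸ X) × E`; a retraction onto `E` restricts to the extension. -/
theorem Module.Injective.exists_extension_of_small_quotient [Module.Injective S E]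
    {Y : Type*} [AddCommGroup Y] [Module S Y] (X : Submodule S Y) [Small.{x} (Y ⧸ X)]
    (φ : X →ₗ[S] E) : ∃ ψ : Y →ₗ[S] E, ∀ z : X, ψ z = φ z := by
  let W := LinearMap.range (X.subtype.prod (-φ))
  have mem_W (z : X) : ((z : Y), -φ z) ∈ W := ⟨z, rfl⟩
  let ε : E →ₗ[S] (Y × E) ⧸ W := W.mkQ ∘ₗ LinearMap.inr S Y E
  have hε : Function.Injective ε := by
    refine (injective_iff_map_eq_zero ε).mpr fun e he => ?_
    obtain ⟨z, hz⟩ := (Submodule.Quotient.mk_eq_zero W).mp he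
    have hz0 : z = 0 := Subtype.ext (congrArg Prod.fst hz)
    simpa [hz0] using (congrArg Prod.snd hz).symm
  have : Small.{x} ((Y × E) ⧸ W) := by
    refine small_of_surjective (f := fun p : (Y ⧸ X) × E =>
      (Submodule.Quotient.mk ((Quotient.out p.1 : Y), p.2) : (Y × E) ⧸ W)) ?_
    rintro ⟨⟨y, e⟩⟩
    have hmem : Quotient.out (Submodule.Quotient.mk y : Y ⧸ X) - y ∈ X :=
      (Submodule.Quotient.eq X).mp (Quotient.out_eq _)
    refine ⟨(Submodule.Quotient.mk y, e - φ ⟨_, hmem⟩), (Submodule.Quotient.eq W).mpr ?_⟩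
    simpa using mem_W ⟨_, hmem⟩
  let σ := Shrink.linearEquiv S ((Y × E) ⧸ W)
  obtain ⟨r, hr⟩ := Module.Injective.out (σ.symm.toLinearMap ∘ₗ ε)
    (σ.symm.injective.comp hε) LinearMap.id
  refine ⟨r ∘ₗ σ.symm.toLinearMap ∘ₗ W.mkQ ∘ₗ LinearMap.inl S Y E, fun z => ?_⟩
  have hz : (Submodule.Quotient.mk ((z : Y), (0 : E)) : (Y × E) ⧸ W) = ε (φ z) :=
    (Submodule.Quotient.eq W).mpr (by simpa using mem_W z)
  simpa [hz] using hr (φ z)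

/-- `(S ∙ y ⊔ D) ⧸ D ≃ S ∙ y ⧸ (S ∙ y ⊓ D)` is cyclic, hence small. -/
theorem LinearPMap.exists_le_mem_domain_of_cogenerates [Module.Injective S E]
    (hE : Cogenerates.{w} S E) {Y : Type w} [AddCommGroup Y] [Module S Y] (p : Y →ₗ.[S] E)
    (y : Y) : ∃ p' : Y →ₗ.[S] E, p ≤ p' ∧ y ∈ p'.domain := by
  let D' := Submodule.span S {y} ⊔ p.domain
  let X := Submodule.comap D'.subtype p.domain
  have : Small.{x} (D' ⧸ X) := by
    have := hE.small_of_finite (Submodule.span S {y} ⧸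
      Submodule.comap (Submodule.span S {y}).subtype (Submodule.span S {y}) ⊓
        Submodule.comap (Submodule.span S {y}).subtype p.domain)
    exact small_map (LinearMap.quotientInfEquivSupQuotient _ p.domain).symm.toEquiv
  obtain ⟨ψ, hψ⟩ := Module.Injective.exists_extension_of_small_quotient X
    (p.toFun ∘ₗ (Submodule.comapSubtypeEquivOfLe le_sup_right).toLinearMap)
  refine ⟨⟨D', ψ⟩, ⟨le_sup_right, fun z z' hzz' => ?_⟩,
    Submodule.mem_sup_left (Submodule.mem_span_singleton_self y)⟩
  have hz' : z' ∈ X := (hzz' ▸ z.2 : (z' : Y) ∈ p.domain)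
  exact (congrArg p (Subtype.ext hzz')).trans (hψ ⟨z', hz'⟩).symm

theorem exists_extension_of_cogenerates [Module.Injective S E] (hE : Cogenerates.{w} S E)
    {Y : Type w} [AddCommGroup Y] [Module S Y] (X : Submodule S Y) (φ : X →ₗ[S] E) :
    ∃ ψ : Y →ₗ[S] E, ∀ z : X, ψ z = φ z := by
  obtain ⟨p, hφp, hp⟩ := zorn_le_nonempty_Ici₀ (LinearPMap.mk X φ)
    (fun c _ hc _ _ => ⟨_, fun _ => LinearPMap.le_sSup hc.directedOn⟩) _ le_rfl
  have htop : p.domain = ⊤ := Submodule.eq_top_iff'.mpr fun y => by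
    obtain ⟨p', hpp', hy⟩ := p.exists_le_mem_domain_of_cogenerates hE y
    exact (hp hpp').1 hy
  exact ⟨p.toFun ∘ₗ (LinearEquiv.ofTop _ htop).symm.toLinearMap, fun z => (hφp.2 rfl).symm⟩

theorem exists_comp_eq_of_ker_le_of_cogenerates [Module.Injective S E]
    (hE : Cogenerates.{w} S E) {X : Type*} {Y : Type w} [AddCommGroup X] [AddCommGroup Y]
    [Module S X] [Module S Y] (f : X →ₗ[S] Y) (g : X →ₗ[S] E)
    (h : LinearMap.ker f ≤ LinearMap.ker g) : ∃ H : Y →ₗ[S] E, H ∘ₗ f = g := by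
  obtain ⟨g', rfl⟩ := f.exists_comp_rangeRestrict_eq g h
  obtain ⟨H, hH⟩ := exists_extension_of_cogenerates hE _ g'
  exact ⟨H, LinearMap.ext fun z => hH (f.rangeRestrict z)⟩

end Extension

def NMSolvable (R : Type*) [Ring R] (N : Type*) [AddCommGroup N] [Module R N] (n m : ℕ) :
    Prop :=
  ∀ (k : Fin m → Fin n → R) (F : Fin m → N),
    (∀ c : Fin m → R, ∑ j, c j • k j = 0 → ∑ j, c j • F j = 0) →
    ∃ x : Fin n → N, ∀ j, F j = ∑ t, k j t • x t

theorem Finset.exists_fin_span_range_eq {R V : Type*} [Semiring R] [AddCommMonoid V]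
    [Module R V] (s : Finset V) {m : ℕ} (hs : s.card ≤ m) :
    ∃ k : Fin m → V, Submodule.span R (Set.range k) = Submodule.span R s := by
  refine ⟨fun j => s.toList[(j : ℕ)]?.getD 0, le_antisymm ?_ ?_⟩
  · refine Submodule.span_le.mpr ?_
    rintro _ ⟨j, rfl⟩
    rcases lt_or_ge (j : ℕ) s.toList.length with hj | hj
    · refine Submodule.subset_span (Finset.mem_toList.mp ?_)
      simp [List.getElem?_eq_getElem hj]
    · simp [List.getElem?_eq_none hj]
  · refine Submodule.span_mono ?_
    intro a ha
    obtain ⟨i, hi, rfl⟩ := List.mem_iff_getElem.mp (Finset.mem_toList.mpr ha)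
    refine ⟨⟨i, by simp at hi; omega⟩, ?_⟩
    simp [List.getElem?_eq_getElem hi]

theorem nmSolvable_of_nmInjectiveLeft {R : Type*} [Ring R] {N : Type*} [AddCommGroup N]
    [Module R N] {n m : ℕ} (hN : NMInjectiveLeft R N n m) : NMSolvable R N n m := by
  classical
  intro k F hrel
  let L := Fintype.linearCombination R k
  obtain ⟨f, hf⟩ := L.exists_comp_rangeRestrict_eq (Fintype.linearCombination R F) fun c hc => by
    have hc' : ∑ j, c j • k j = 0 := by simpa [L, Fintype.linearCombination_apply] using hc
    simpa [Fintype.linearCombination_apply] using hrel c hc'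
  obtain ⟨g, hg⟩ := hN _ ⟨Finset.univ.image k, (Finset.card_image_le).trans (by simp),
    by simp [L, Fintype.range_linearCombination]⟩ f
  refine ⟨fun t => g (Pi.single t 1), fun j => ?_⟩
  calc F j = f (L.rangeRestrict (Pi.single j 1)) := by
        rw [← LinearMap.comp_apply, hf]
        simp [Fintype.linearCombination_apply, Pi.single_apply]
    _ = g (k j) := by
        rw [← hg]
        simp [L, Fintype.linearCombination_apply, Pi.single_apply]
    _ = ∑ t, k j t • g (Pi.single t 1) := by
        conv_lhs => rw [pi_eq_sum_univ' (k j)]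
        simp

theorem nmInjectiveLeft_of_nmSolvable {R : Type*} [Ring R] {N : Type*} [AddCommGroup N]
    [Module R N] {n m : ℕ} (hN : NMSolvable R N n m) : NMInjectiveLeft R N n m := by
  rintro K ⟨s, hcard, rfl⟩ f
  obtain ⟨k, hk⟩ := s.exists_fin_span_range_eq (R := R) hcard
  have hkK (j : Fin m) : k j ∈ Submodule.span R (s : Set (Fin n → R)) := by
    rw [← hk]
    exact Submodule.subset_span ⟨j, rfl⟩
  have hf (c : Fin m → R) (h : ∑ j, c j • k j ∈ Submodule.span R (s : Set (Fin n → R))) :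
      f ⟨∑ j, c j • k j, h⟩ = ∑ j, c j • f ⟨k j, hkK j⟩ := by
    simp_rw [← map_smul, ← map_sum]
    congr 1
    ext
    simp
  obtain ⟨x, hx⟩ := hN k (fun j => f ⟨k j, hkK j⟩) fun c hc => by
    rw [← hf c (by rw [hc]; exact zero_mem _)]
    simp only [hc]
    exact map_zero f
  refine ⟨Fintype.linearCombination R x, fun ⟨a, ha⟩ => ?_⟩
  rw [← hk] at ha
  obtain ⟨c, rfl⟩ := (Submodule.mem_span_range_iff_exists_fun R).mp ha
  simp [hf, hx, Fintype.linearCombination_apply]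

theorem nmInjectiveLeft_iff_nmSolvable {R : Type*} [Ring R] {N : Type*} [AddCommGroup N]
    [Module R N] {n m : ℕ} : NMInjectiveLeft R N n m ↔ NMSolvable R N n m :=
  ⟨nmSolvable_of_nmInjectiveLeft, nmInjectiveLeft_of_nmSolvable⟩

section HomDual

universe w

variable {S R E : Type*} {M : Type w} [CommRing S] [Ring R]
  [AddCommGroup M] [Module Rᵐᵒᵖ M] [Module S M] [SMulCommClass Rᵐᵒᵖ S M]
  [AddCommGroup E] [Module S E]

@[simp]
theorem homModule_smul_apply (r : R) (f : M →ₗ[S] E) (z : M) : (r • f) z = f (op r • z) := rfl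

variable (S) in
def rightVecMul {m n : ℕ} (k : Fin m → Fin n → R) : (Fin m → M) →ₗ[S] (Fin n → M) :=
  LinearMap.pi fun t => LinearMap.lsum S (fun _ => M) S fun j => rightMulS S R M (k j t)

@[simp]
theorem rightVecMul_apply {m n : ℕ} (k : Fin m → Fin n → R) (v : Fin m → M) (t : Fin n) :
    rightVecMul S k v t = ∑ j, op (k j t) • v j := by
  simp [rightVecMul, rightMulS]

theorem nmSolvable_hom_of_nmFlatRight [Module.Injective S E] (hE : Cogenerates.{w} S E)
    {n m : ℕ} (hM : NMFlatRight R M n m) : NMSolvable R (M →ₗ[S] E) n m := by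
  intro k F hrel
  have hker : LinearMap.ker (rightVecMul S k) ≤
      LinearMap.ker (LinearMap.lsum S (fun _ => M) S F) := by
    intro v hv
    obtain ⟨L, z, c, hc, hvz⟩ := hM k v fun t => by simpa using congrFun hv t
    have hrel' (l : Fin L) : ∑ j, c l j • F j = 0 :=
      hrel (c l) (funext fun t => by simpa [Finset.sum_apply] using hc l t)
    calc LinearMap.lsum S (fun _ => M) S F v = ∑ l, (∑ j, c l j • F j) (z l) := by
          simp [hvz, Finset.sum_comm (γ := Fin L)]
      _ = 0 := by simp [hrel']
  obtain ⟨H, hH⟩ := exists_comp_eq_of_ker_le_of_cogenerates hE _ _ hker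
  refine ⟨fun t => H ∘ₗ LinearMap.single S (fun _ => M) t, fun j => LinearMap.ext fun z => ?_⟩
  have hsingle : rightVecMul S k (Pi.single j z) = ∑ t, Pi.single t (op (k j t) • z) := by
    ext t
    simp [Pi.single_apply]
  rw [← LinearMap.lsum_piSingle (S := S) (f := F) (i := j) (x := z), ← hH,
    LinearMap.comp_apply, hsingle]
  simp

theorem nmFlatRight_of_nmSolvable_hom (hE : Cogenerates.{w} S E)
    {n m : ℕ} (hM : NMSolvable R (M →ₗ[S] E) n m) : NMFlatRight R M n m := by
  intro k y hy
  let trivialSolutions : Set (Fin m → M) :=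
    {v | ∃ (z : M) (c : Fin m → R), ∑ j, c j • k j = 0 ∧ v = fun j => op (c j) • z}
  have hy_mem : y ∈ Submodule.span S trivialSolutions := by
    by_contra hy_not_mem
    obtain ⟨G, hG, hGy⟩ := hE.exists_le_ker_apply_ne_zero hy_not_mem
    obtain ⟨x, hx⟩ := hM k (fun j => G ∘ₗ LinearMap.single S (fun _ => M) j)
      fun c hc => LinearMap.ext fun z => by
        have hcz := hG (Submodule.subset_span ⟨z, c, hc, rfl⟩)
        rw [LinearMap.mem_ker, ← Finset.univ_sum_single (fun j => op (c j) • z), map_sum] at hcz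
        simpa using hcz
    apply hGy
    calc G y = ∑ j, (G ∘ₗ LinearMap.single S (fun _ => M) j) (y j) := by
          conv_lhs => rw [← Finset.univ_sum_single y]
          simp
      _ = ∑ t, x t (∑ j, op (k j t) • y j) := by
          simp only [hx, LinearMap.sum_apply, homModule_smul_apply, map_sum]
          exact Finset.sum_comm
      _ = 0 := by simp [hy]
  obtain ⟨L, a, g, hg⟩ := Submodule.mem_span_set'.mp hy_mem
  choose z c hc hzc using fun l => (g l).2
  refine ⟨L, fun l => a l • z l, c,
    fun l t => by simpa [Finset.sum_apply] using congrFun (hc l) t, fun j => ?_⟩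
  rw [← hg]
  simp [hzc, smul_comm]

end HomDual

theorem stmt_16_general (S : Type u) (R : Type v) (M : Type w) (E : Type x)
    [CommRing S] [Ring R]
    [AddCommGroup M] [Module Rᵐᵒᵖ M] [Module S M] [SMulCommClass Rᵐᵒᵖ S M]
    [AddCommGroup E] [Module S E] [Module.Injective S E]
    (hcog : ∀ (N : Type w) [AddCommGroup N] [Module S N] (x : N), x ≠ 0 →
      ∃ f : N →ₗ[S] E, f x ≠ 0)
    (n m : ℕ) :
    NMFlatRight R M n m ↔ NMInjectiveLeft R (M →ₗ[S] E) n m := by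
  rw [nmInjectiveLeft_iff_nmSolvable]
  exact ⟨nmSolvable_hom_of_nmFlatRight hcog, nmFlatRight_of_nmSolvable_hom hcog⟩

/-- let `R` be an algebra over a commutative ring `S`, `E` an
injective cogenerator of `S`-modules, and `M` a right `R`-module.  Then `M` is
`(n,m)`-flat iff the left `R`-module `Hom_S(M, E)` is `(n,m)`-injective. -/
theorem stmt_16 (S : Type u) (R : Type v) (M : Type w) (E : Type x)
    [CommRing S] [Ring R] [Algebra S R]
    [AddCommGroup M] [Module Rᵐᵒᵖ M] [Module S M] [SMulCommClass Rᵐᵒᵖ S M]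
    [IsScalarTower S Rᵐᵒᵖ M]
    [AddCommGroup E] [Module S E] [Module.Injective S E]
    (hcog : ∀ (N : Type w) [AddCommGroup N] [Module S N] (x : N), x ≠ 0 →
      ∃ f : N →ₗ[S] E, f x ≠ 0)
    (n m : ℕ) (hn : 0 < n) (hm : 0 < m) :
    NMFlatRight R M n m ↔ NMInjectiveLeft R (M →ₗ[S] E) n m :=
  stmt_16_general S R M E hcog n m
end
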